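/- arXiv:2601.16433 — 4 statements merged into one kernel-verified Lean document; each statement's English description precedes it below -/
import Mathlib

section
/- Let 𝔫₇¹⁴² be the complex Lie algebra given by structure constants on the basis X₁,…,X₇ with nonzero brackets ⁅X₁,X₃⁆ = X₂, ⁅X₁,X₅⁆ = X₄, ⁅X₁,X₇⁆ = X₆, ⁅X₃,X₅⁆ = X₄, ⁅X₅,X₇⁆ = X₂, and let (37D) be the complex Lie algebra given by structure constants on the basis e₁,…,e₇ with nonzero brackets ⁅e₁,e₂⁆ = e₅, ⁅e₃,e₄⁆ = e₅, ⁅e₁,e₃⁆ = e₆, ⁅e₂,e₄⁆ = e₇. Then there exists an isomorphism of complex Lie algebras 𝔫₇¹⁴² ≅ (37D). -/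
/-- the complex Lie algebra `𝔫₇¹⁴²` (basis `X₁,…,X₇`, brackets
`⁅X₁,X₃⁆=X₂, ⁅X₁,X₅⁆=X₄, ⁅X₁,X₇⁆=X₆, ⁅X₃,X₅⁆=X₄, ⁅X₅,X₇⁆=X₂`) is isomorphic to the
complex Lie algebra `(37D)` (basis `e₁,…,e₇`, brackets
`⁅e₁,e₂⁆=e₅, ⁅e₃,e₄⁆=e₅, ⁅e₁,e₃⁆=e₆, ⁅e₂,e₄⁆=e₇`).
Here `X i` for `i : Fin 7` stands for `Xᵢ₊₁`, and similarly for `e`. -/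
theorem stmt4 {L₁ : Type*} [LieRing L₁] [LieAlgebra ℂ L₁]
    {L₂ : Type*} [LieRing L₂] [LieAlgebra ℂ L₂]
    (X : Module.Basis (Fin 7) ℂ L₁)
    (hX1 : ⁅X 0, X 2⁆ = X 1) (hX2 : ⁅X 0, X 4⁆ = X 3) (hX3 : ⁅X 0, X 6⁆ = X 5)
    (hX4 : ⁅X 2, X 4⁆ = X 3) (hX5 : ⁅X 4, X 6⁆ = X 1)
    (hX0 : ∀ i j : Fin 7, i < j →
      (i, j) ∉ ({(0, 2), (0, 4), (0, 6), (2, 4), (4, 6)} : Set (Fin 7 × Fin 7)) →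
      ⁅X i, X j⁆ = 0)
    (e : Module.Basis (Fin 7) ℂ L₂)
    (he1 : ⁅e 0, e 1⁆ = e 4) (he2 : ⁅e 2, e 3⁆ = e 4) (he3 : ⁅e 0, e 2⁆ = e 5)
    (he4 : ⁅e 1, e 3⁆ = e 6)
    (he0 : ∀ i j : Fin 7, i < j →
      (i, j) ∉ ({(0, 1), (2, 3), (0, 2), (1, 3)} : Set (Fin 7 × Fin 7)) →
      ⁅e i, e j⁆ = 0) :
    Nonempty (L₁ ≃ₗ⁅ℂ⁆ L₂) := by
  obtain ⟨f, hfb⟩ : ∃ f : L₁ →ₗ[ℂ] L₂,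
      ∀ i, f (X i) = ![e 0 - e 1, -e 4, -e 1, -e 6, e 3, e 5, e 2] i :=
    ⟨X.constr ℂ _, fun i => X.constr_basis ℂ _ i⟩
  obtain ⟨g, hgb⟩ : ∃ g : L₂ →ₗ[ℂ] L₁,
      ∀ i, g (e i) = ![X 0 - X 2, -X 2, X 6, X 4, -X 1, X 5, -X 3] i :=
    ⟨e.constr ℂ _, fun i => e.constr_basis ℂ _ i⟩
  have Xb00 : ⁅X 0, X 0⁆ = (0:L₁) := lie_self _
  have Xb01 : ⁅X 0, X 1⁆ = 0 := hX0 0 1 (by decide) (by simp)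
  have Xb02 : ⁅X 0, X 2⁆ = X 1 := hX1
  have Xb03 : ⁅X 0, X 3⁆ = 0 := hX0 0 3 (by decide) (by simp)
  have Xb04 : ⁅X 0, X 4⁆ = X 3 := hX2
  have Xb05 : ⁅X 0, X 5⁆ = 0 := hX0 0 5 (by decide) (by simp)
  have Xb06 : ⁅X 0, X 6⁆ = X 5 := hX3
  have Xb10 : ⁅X 1, X 0⁆ = 0 := by rw [← lie_skew, Xb01, neg_zero]
  have Xb11 : ⁅X 1, X 1⁆ = (0:L₁) := lie_self _
  have Xb12 : ⁅X 1, X 2⁆ = 0 := hX0 1 2 (by decide) (by simp)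
  have Xb13 : ⁅X 1, X 3⁆ = 0 := hX0 1 3 (by decide) (by simp)
  have Xb14 : ⁅X 1, X 4⁆ = 0 := hX0 1 4 (by decide) (by simp)
  have Xb15 : ⁅X 1, X 5⁆ = 0 := hX0 1 5 (by decide) (by simp)
  have Xb16 : ⁅X 1, X 6⁆ = 0 := hX0 1 6 (by decide) (by simp)
  have Xb20 : ⁅X 2, X 0⁆ = -(X 1) := by rw [← lie_skew, Xb02]
  have Xb21 : ⁅X 2, X 1⁆ = 0 := by rw [← lie_skew, Xb12, neg_zero]
  have Xb22 : ⁅X 2, X 2⁆ = (0:L₁) := lie_self _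
  have Xb23 : ⁅X 2, X 3⁆ = 0 := hX0 2 3 (by decide) (by simp)
  have Xb24 : ⁅X 2, X 4⁆ = X 3 := hX4
  have Xb25 : ⁅X 2, X 5⁆ = 0 := hX0 2 5 (by decide) (by simp)
  have Xb26 : ⁅X 2, X 6⁆ = 0 := hX0 2 6 (by decide) (by simp)
  have Xb30 : ⁅X 3, X 0⁆ = 0 := by rw [← lie_skew, Xb03, neg_zero]
  have Xb31 : ⁅X 3, X 1⁆ = 0 := by rw [← lie_skew, Xb13, neg_zero]
  have Xb32 : ⁅X 3, X 2⁆ = 0 := by rw [← lie_skew, Xb23, neg_zero]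
  have Xb33 : ⁅X 3, X 3⁆ = (0:L₁) := lie_self _
  have Xb34 : ⁅X 3, X 4⁆ = 0 := hX0 3 4 (by decide) (by simp)
  have Xb35 : ⁅X 3, X 5⁆ = 0 := hX0 3 5 (by decide) (by simp)
  have Xb36 : ⁅X 3, X 6⁆ = 0 := hX0 3 6 (by decide) (by simp)
  have Xb40 : ⁅X 4, X 0⁆ = -(X 3) := by rw [← lie_skew, Xb04]
  have Xb41 : ⁅X 4, X 1⁆ = 0 := by rw [← lie_skew, Xb14, neg_zero]
  have Xb42 : ⁅X 4, X 2⁆ = -(X 3) := by rw [← lie_skew, Xb24]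
  have Xb43 : ⁅X 4, X 3⁆ = 0 := by rw [← lie_skew, Xb34, neg_zero]
  have Xb44 : ⁅X 4, X 4⁆ = (0:L₁) := lie_self _
  have Xb45 : ⁅X 4, X 5⁆ = 0 := hX0 4 5 (by decide) (by simp)
  have Xb46 : ⁅X 4, X 6⁆ = X 1 := hX5
  have Xb50 : ⁅X 5, X 0⁆ = 0 := by rw [← lie_skew, Xb05, neg_zero]
  have Xb51 : ⁅X 5, X 1⁆ = 0 := by rw [← lie_skew, Xb15, neg_zero]
  have Xb52 : ⁅X 5, X 2⁆ = 0 := by rw [← lie_skew, Xb25, neg_zero]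
  have Xb53 : ⁅X 5, X 3⁆ = 0 := by rw [← lie_skew, Xb35, neg_zero]
  have Xb54 : ⁅X 5, X 4⁆ = 0 := by rw [← lie_skew, Xb45, neg_zero]
  have Xb55 : ⁅X 5, X 5⁆ = (0:L₁) := lie_self _
  have Xb56 : ⁅X 5, X 6⁆ = 0 := hX0 5 6 (by decide) (by simp)
  have Xb60 : ⁅X 6, X 0⁆ = -(X 5) := by rw [← lie_skew, Xb06]
  have Xb61 : ⁅X 6, X 1⁆ = 0 := by rw [← lie_skew, Xb16, neg_zero]
  have Xb62 : ⁅X 6, X 2⁆ = 0 := by rw [← lie_skew, Xb26, neg_zero]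
  have Xb63 : ⁅X 6, X 3⁆ = 0 := by rw [← lie_skew, Xb36, neg_zero]
  have Xb64 : ⁅X 6, X 4⁆ = -(X 1) := by rw [← lie_skew, Xb46]
  have Xb65 : ⁅X 6, X 5⁆ = 0 := by rw [← lie_skew, Xb56, neg_zero]
  have Xb66 : ⁅X 6, X 6⁆ = (0:L₁) := lie_self _
  have eb00 : ⁅e 0, e 0⁆ = (0:L₂) := lie_self _
  have eb01 : ⁅e 0, e 1⁆ = e 4 := he1
  have eb02 : ⁅e 0, e 2⁆ = e 5 := he3
  have eb03 : ⁅e 0, e 3⁆ = 0 := he0 0 3 (by decide) (by simp)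
  have eb04 : ⁅e 0, e 4⁆ = 0 := he0 0 4 (by decide) (by simp)
  have eb05 : ⁅e 0, e 5⁆ = 0 := he0 0 5 (by decide) (by simp)
  have eb06 : ⁅e 0, e 6⁆ = 0 := he0 0 6 (by decide) (by simp)
  have eb10 : ⁅e 1, e 0⁆ = -(e 4) := by rw [← lie_skew, eb01]
  have eb11 : ⁅e 1, e 1⁆ = (0:L₂) := lie_self _
  have eb12 : ⁅e 1, e 2⁆ = 0 := he0 1 2 (by decide) (by simp)
  have eb13 : ⁅e 1, e 3⁆ = e 6 := he4
  have eb14 : ⁅e 1, e 4⁆ = 0 := he0 1 4 (by decide) (by simp)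
  have eb15 : ⁅e 1, e 5⁆ = 0 := he0 1 5 (by decide) (by simp)
  have eb16 : ⁅e 1, e 6⁆ = 0 := he0 1 6 (by decide) (by simp)
  have eb20 : ⁅e 2, e 0⁆ = -(e 5) := by rw [← lie_skew, eb02]
  have eb21 : ⁅e 2, e 1⁆ = 0 := by rw [← lie_skew, eb12, neg_zero]
  have eb22 : ⁅e 2, e 2⁆ = (0:L₂) := lie_self _
  have eb23 : ⁅e 2, e 3⁆ = e 4 := he2
  have eb24 : ⁅e 2, e 4⁆ = 0 := he0 2 4 (by decide) (by simp)
  have eb25 : ⁅e 2, e 5⁆ = 0 := he0 2 5 (by decide) (by simp)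
  have eb26 : ⁅e 2, e 6⁆ = 0 := he0 2 6 (by decide) (by simp)
  have eb30 : ⁅e 3, e 0⁆ = 0 := by rw [← lie_skew, eb03, neg_zero]
  have eb31 : ⁅e 3, e 1⁆ = -(e 6) := by rw [← lie_skew, eb13]
  have eb32 : ⁅e 3, e 2⁆ = -(e 4) := by rw [← lie_skew, eb23]
  have eb33 : ⁅e 3, e 3⁆ = (0:L₂) := lie_self _
  have eb34 : ⁅e 3, e 4⁆ = 0 := he0 3 4 (by decide) (by simp)
  have eb35 : ⁅e 3, e 5⁆ = 0 := he0 3 5 (by decide) (by simp)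
  have eb36 : ⁅e 3, e 6⁆ = 0 := he0 3 6 (by decide) (by simp)
  have eb40 : ⁅e 4, e 0⁆ = 0 := by rw [← lie_skew, eb04, neg_zero]
  have eb41 : ⁅e 4, e 1⁆ = 0 := by rw [← lie_skew, eb14, neg_zero]
  have eb42 : ⁅e 4, e 2⁆ = 0 := by rw [← lie_skew, eb24, neg_zero]
  have eb43 : ⁅e 4, e 3⁆ = 0 := by rw [← lie_skew, eb34, neg_zero]
  have eb44 : ⁅e 4, e 4⁆ = (0:L₂) := lie_self _
  have eb45 : ⁅e 4, e 5⁆ = 0 := he0 4 5 (by decide) (by simp)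
  have eb46 : ⁅e 4, e 6⁆ = 0 := he0 4 6 (by decide) (by simp)
  have eb50 : ⁅e 5, e 0⁆ = 0 := by rw [← lie_skew, eb05, neg_zero]
  have eb51 : ⁅e 5, e 1⁆ = 0 := by rw [← lie_skew, eb15, neg_zero]
  have eb52 : ⁅e 5, e 2⁆ = 0 := by rw [← lie_skew, eb25, neg_zero]
  have eb53 : ⁅e 5, e 3⁆ = 0 := by rw [← lie_skew, eb35, neg_zero]
  have eb54 : ⁅e 5, e 4⁆ = 0 := by rw [← lie_skew, eb45, neg_zero]
  have eb55 : ⁅e 5, e 5⁆ = (0:L₂) := lie_self _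
  have eb56 : ⁅e 5, e 6⁆ = 0 := he0 5 6 (by decide) (by simp)
  have eb60 : ⁅e 6, e 0⁆ = 0 := by rw [← lie_skew, eb06, neg_zero]
  have eb61 : ⁅e 6, e 1⁆ = 0 := by rw [← lie_skew, eb16, neg_zero]
  have eb62 : ⁅e 6, e 2⁆ = 0 := by rw [← lie_skew, eb26, neg_zero]
  have eb63 : ⁅e 6, e 3⁆ = 0 := by rw [← lie_skew, eb36, neg_zero]
  have eb64 : ⁅e 6, e 4⁆ = 0 := by rw [← lie_skew, eb46, neg_zero]
  have eb65 : ⁅e 6, e 5⁆ = 0 := by rw [← lie_skew, eb56, neg_zero]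
  have eb66 : ⁅e 6, e 6⁆ = (0:L₂) := lie_self _
  have fb0 : f (X 0) = e 0 - e 1 := hfb 0
  have fb1 : f (X 1) = -e 4 := hfb 1
  have fb2 : f (X 2) = -e 1 := hfb 2
  have fb3 : f (X 3) = -e 6 := hfb 3
  have fb4 : f (X 4) = e 3 := hfb 4
  have fb5 : f (X 5) = e 5 := hfb 5
  have fb6 : f (X 6) = e 2 := hfb 6
  have gb0 : g (e 0) = X 0 - X 2 := hgb 0
  have gb1 : g (e 1) = -X 2 := hgb 1
  have gb2 : g (e 2) = X 6 := hgb 2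
  have gb3 : g (e 3) = X 4 := hgb 3
  have gb4 : g (e 4) = -X 1 := hgb 4
  have gb5 : g (e 5) = X 5 := hgb 5
  have gb6 : g (e 6) = -X 3 := hgb 6
  have hgf : g.comp f = LinearMap.id := by
    apply X.ext
    intro i
    set_option maxHeartbeats 2000000 in
    fin_cases i <;>
      simp only [LinearMap.comp_apply, LinearMap.id_apply, Fin.isValue, Fin.zero_eta, Fin.mk_one, Fin.reduceFinMk, fb0, fb1, fb2, fb3, fb4, fb5, fb6, gb0, gb1, gb2, gb3, gb4, gb5, gb6,
        map_sub, map_neg] <;> abel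
  have hfg : f.comp g = LinearMap.id := by
    apply e.ext
    intro i
    set_option maxHeartbeats 2000000 in
    fin_cases i <;>
      simp only [LinearMap.comp_apply, LinearMap.id_apply, Fin.isValue, Fin.zero_eta, Fin.mk_one, Fin.reduceFinMk, fb0, fb1, fb2, fb3, fb4, fb5, fb6, gb0, gb1, gb2, gb3, gb4, gb5, gb6,
        map_sub, map_neg] <;> abel
  have key : ∀ i j : Fin 7, f ⁅X i, X j⁆ = ⁅f (X i), f (X j)⁆ := by
    intro i j
    set_option maxHeartbeats 2000000 in
    fin_cases i <;> fin_cases j <;>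
      simp only [Fin.isValue, Fin.zero_eta, Fin.mk_one, Fin.reduceFinMk, Xb00, Xb01, Xb02, Xb03, Xb04, Xb05, Xb06, Xb10, Xb11, Xb12, Xb13, Xb14, Xb15, Xb16, Xb20, Xb21, Xb22, Xb23, Xb24, Xb25, Xb26, Xb30, Xb31, Xb32, Xb33, Xb34, Xb35, Xb36, Xb40, Xb41, Xb42, Xb43, Xb44, Xb45, Xb46, Xb50, Xb51, Xb52, Xb53, Xb54, Xb55, Xb56, Xb60, Xb61, Xb62, Xb63, Xb64, Xb65, Xb66, eb00, eb01, eb02, eb03, eb04, eb05, eb06, eb10, eb11, eb12, eb13, eb14, eb15, eb16, eb20, eb21, eb22, eb23, eb24, eb25, eb26, eb30, eb31, eb32, eb33, eb34, eb35, eb36, eb40, eb41, eb42, eb43, eb44, eb45, eb46, eb50, eb51, eb52, eb53, eb54, eb55, eb56, eb60, eb61, eb62, eb63, eb64, eb65, eb66, fb0, fb1, fb2, fb3, fb4, fb5, fb6,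
        map_zero, map_neg, map_sub, lie_sub, sub_lie, lie_neg, neg_lie,
        neg_zero, sub_zero, zero_sub, neg_neg, sub_self, lie_zero, zero_lie] <;>
      abel
  let B1 : L₁ →ₗ[ℂ] L₁ →ₗ[ℂ] L₂ := LinearMap.mk₂ ℂ (fun x y => f ⁅x, y⁆)
    (fun x y z => by rw [add_lie, map_add]) (fun c x y => by rw [smul_lie, map_smul])
    (fun x y z => by rw [lie_add, map_add]) (fun c x y => by rw [lie_smul, map_smul])
  let B2 : L₁ →ₗ[ℂ] L₁ →ₗ[ℂ] L₂ := LinearMap.mk₂ ℂ (fun x y => ⁅f x, f y⁆)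
    (fun x y z => by rw [map_add, add_lie]) (fun c x y => by rw [map_smul, smul_lie])
    (fun x y z => by rw [map_add, lie_add]) (fun c x y => by rw [map_smul, lie_smul])
  have hB : B1 = B2 := LinearMap.ext_basis X X (fun i j => key i j)
  have maplie : ∀ x y : L₁, f ⁅x, y⁆ = ⁅f x, f y⁆ := by
    intro x y
    have := congrArg (fun m => m x y) hB
    simpa only [B1, B2, LinearMap.mk₂_apply] using this
  refine ⟨{ toFun := f, map_add' := f.map_add, map_smul' := f.map_smul,
             map_lie' := fun {x y} => maplie x y,
             invFun := g,
             left_inv := fun x => by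
               have := congrArg (fun m => m x) hgf
               simpa using this,
             right_inv := fun x => by
               have := congrArg (fun m => m x) hfg
               simpa using this }⟩
end

section
/- Let N₃^{8,2} be the real Lie algebra given by structure constants on the basis x₁,…,x₈ with nonzero brackets ⁅x₁,x₂⁆ = x₇, ⁅x₄,x₅⁆ = x₇, ⁅x₃,x₄⁆ = x₈, ⁅x₅,x₆⁆ = x₈, and let 𝔫 = ℂ ⊗_ℝ N₃^{8,2} be its complexification with conjugation σ. Set A₁ = x₁ + i x₂, A₂ = x₃ + i x₆, A₃ = x₅ + i x₄, B₁ = −2i x₇, B₂ = −2i x₈. Then the ℤ²-decomposition with 𝔫_{-1,0} = spanℂ{A₁,A₂,A₃}, 𝔫_{0,-1} = spanℂ{σ(A₁),σ(A₂),σ(A₃)}, 𝔫_{-1,-1} = spanℂ{B₁,B₂} and all other pieces zero is a grading, i.e. ⁅𝔫_{p,q}, 𝔫_{r,s}⁆ ⊆ 𝔫_{p+r,q+s} for all (p,q),(r,s), and σ(𝔫_{p,q}) = 𝔫_{q,p} for all (p,q). -/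
open TensorProduct

set_option maxHeartbeats 2000000

/-- bigrading of the complexification of the real Lie algebra `N₃^{8,2}`
(basis `x₁,…,x₈` with `⁅x₁,x₂⁆=x₇, ⁅x₄,x₅⁆=x₇, ⁅x₃,x₄⁆=x₈, ⁅x₅,x₆⁆=x₈`), via
`A₁ = x₁+ix₂, A₂ = x₃+ix₆, A₃ = x₅+ix₄, B₁ = −2ix₇, B₂ = −2ix₈`.
The basis is indexed by `Fin 8` with `b i` standing for `xᵢ₊₁`; `σ` is the conjugation
of the complexification `ℂ ⊗[ℝ] L`. -/
theorem stmt12 {L : Type*} [LieRing L] [LieAlgebra ℝ L]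
    (b : Module.Basis (Fin 8) ℝ L)
    (h1 : ⁅b 0, b 1⁆ = b 6) (h2 : ⁅b 3, b 4⁆ = b 6)
    (h3 : ⁅b 2, b 3⁆ = b 7) (h4 : ⁅b 4, b 5⁆ = b 7)
    (h0 : ∀ i j : Fin 8, i < j →
      (i, j) ∉ ({(0, 1), (3, 4), (2, 3), (4, 5)} : Set (Fin 8 × Fin 8)) →
      ⁅b i, b j⁆ = 0)
    (σ : (ℂ ⊗[ℝ] L) →ₗ[ℝ] (ℂ ⊗[ℝ] L))
    (hσ : ∀ (z : ℂ) (v : L), σ (z ⊗ₜ[ℝ] v) = (starRingEnd ℂ z) ⊗ₜ[ℝ] v)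
    (A : Fin 3 → (ℂ ⊗[ℝ] L)) (B : Fin 2 → (ℂ ⊗[ℝ] L))
    (hA1 : A 0 = (1 : ℂ) ⊗ₜ[ℝ] b 0 + Complex.I ⊗ₜ[ℝ] b 1)
    (hA2 : A 1 = (1 : ℂ) ⊗ₜ[ℝ] b 2 + Complex.I ⊗ₜ[ℝ] b 5)
    (hA3 : A 2 = (1 : ℂ) ⊗ₜ[ℝ] b 4 + Complex.I ⊗ₜ[ℝ] b 3)
    (hB1 : B 0 = (-2 * Complex.I) ⊗ₜ[ℝ] b 6)
    (hB2 : B 1 = (-2 * Complex.I) ⊗ₜ[ℝ] b 7)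
    (n : ℤ × ℤ → Submodule ℂ (ℂ ⊗[ℝ] L))
    (hn1 : n (-1, 0) = Submodule.span ℂ {A 0, A 1, A 2})
    (hn2 : n (0, -1) = Submodule.span ℂ {σ (A 0), σ (A 1), σ (A 2)})
    (hn3 : n (-1, -1) = Submodule.span ℂ {B 0, B 1})
    (hn0 : ∀ pq : ℤ × ℤ, pq ∉ ({(-1, 0), (0, -1), (-1, -1)} : Set (ℤ × ℤ)) → n pq = ⊥) :
    DirectSum.IsInternal n ∧
    (∀ p q r s : ℤ, ∀ x ∈ n (p, q), ∀ y ∈ n (r, s), ⁅x, y⁆ ∈ n (p + r, q + s)) ∧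
    (∀ p q : ℤ, σ '' (n (p, q) : Set (ℂ ⊗[ℝ] L)) = (n (q, p) : Set (ℂ ⊗[ℝ] L))) := by
  classical
  set d : Module.Basis (Fin 8) ℂ (ℂ ⊗[ℝ] L) := Module.Basis.baseChange ℂ b with hd
  have hdap : ∀ i : Fin 8, d i = (1 : ℂ) ⊗ₜ[ℝ] b i := fun i => Module.Basis.baseChange_apply ℂ b i
  have tsmul : ∀ (z : ℂ) (i : Fin 8), z ⊗ₜ[ℝ] b i = z • d i := by
    intro z i
    rw [hdap, TensorProduct.smul_tmul', smul_eq_mul, mul_one]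
  -- bridged Lie lemmas (the bracket instance in the statement is the raw one)
  have ladd : ∀ x y z : ℂ ⊗[ℝ] L, ⁅x, y + z⁆ = ⁅x, y⁆ + ⁅x, z⁆ := fun x y z => lie_add x y z
  have addl : ∀ x y z : ℂ ⊗[ℝ] L, ⁅x + y, z⁆ = ⁅x, z⁆ + ⁅y, z⁆ := fun x y z => add_lie x y z
  have lsub : ∀ x y z : ℂ ⊗[ℝ] L, ⁅x, y - z⁆ = ⁅x, y⁆ - ⁅x, z⁆ := fun x y z => lie_sub x y z
  have subl : ∀ x y z : ℂ ⊗[ℝ] L, ⁅x - y, z⁆ = ⁅x, z⁆ - ⁅y, z⁆ := fun x y z => sub_lie x y z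
  have lzero : ∀ x : ℂ ⊗[ℝ] L, ⁅x, (0 : ℂ ⊗[ℝ] L)⁆ = 0 := fun x => lie_zero x
  have zerol : ∀ x : ℂ ⊗[ℝ] L, ⁅(0 : ℂ ⊗[ℝ] L), x⁆ = 0 := fun x => zero_lie x
  have lsmul : ∀ (t : ℂ) (x y : ℂ ⊗[ℝ] L), ⁅x, t • y⁆ = t • ⁅x, y⁆ := fun t x y => lie_smul t x y
  have smull : ∀ (t : ℂ) (x y : ℂ ⊗[ℝ] L), ⁅t • x, y⁆ = t • ⁅x, y⁆ := fun t x y => smul_lie t x y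
  have lself : ∀ x : ℂ ⊗[ℝ] L, ⁅x, x⁆ = 0 := fun x => lie_self x
  have lskew : ∀ x y : ℂ ⊗[ℝ] L, ⁅x, y⁆ = -⁅y, x⁆ := fun x y => (lie_skew x y).symm
  -- all unlisted brackets of basis vectors vanish
  have hz : ∀ i j : Fin 8,
      ((i, j) ∈ ([(0,1),(1,0),(3,4),(4,3),(2,3),(3,2),(4,5),(5,4)] :
        List (Fin 8 × Fin 8)) → False) →
      ⁅b i, b j⁆ = 0 := by
    intro i j hij
    rcases lt_trichotomy i j with h | h | h
    · refine h0 i j h ?_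
      intro hmem
      apply hij
      simp only [Set.mem_insert_iff, Set.mem_singleton_iff] at hmem
      rcases hmem with h' | h' | h' | h' <;>
        (simp only [Prod.ext_iff] at h'; rcases h' with ⟨rfl, rfl⟩; decide)
    · rw [h, lie_self]
    · rw [← lie_skew, h0 j i h, neg_zero]
      intro hmem
      apply hij
      simp only [Set.mem_insert_iff, Set.mem_singleton_iff] at hmem
      rcases hmem with h' | h' | h' | h' <;>
        (simp only [Prod.ext_iff] at h'; rcases h' with ⟨rfl, rfl⟩; decide)
  -- structure constants for the complexified basis d
  have hdz : ∀ i j : Fin 8, ⁅b i, b j⁆ = 0 → ⁅d i, d j⁆ = 0 := by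
    intro i j h
    rw [hdap, hdap, LieAlgebra.ExtendScalars.bracket_tmul, h, TensorProduct.tmul_zero]
  have hdbr : ∀ i j k : Fin 8, ⁅b i, b j⁆ = b k → ⁅d i, d j⁆ = d k := by
    intro i j k h
    rw [hdap, hdap, hdap, LieAlgebra.ExtendScalars.bracket_tmul, h, one_mul]
  have hd01 : ⁅d 0, d 1⁆ = d 6 := hdbr 0 1 6 h1
  have hd34 : ⁅d 3, d 4⁆ = d 6 := hdbr 3 4 6 h2
  have hd23 : ⁅d 2, d 3⁆ = d 7 := hdbr 2 3 7 h3
  have hd45 : ⁅d 4, d 5⁆ = d 7 := hdbr 4 5 7 h4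
  have hd10 : ⁅d 1, d 0⁆ = -d 6 := by rw [lskew, hd01]
  have hd43 : ⁅d 4, d 3⁆ = -d 6 := by rw [lskew, hd34]
  have hd32 : ⁅d 3, d 2⁆ = -d 7 := by rw [lskew, hd23]
  have hd54 : ⁅d 5, d 4⁆ = -d 7 := by rw [lskew, hd45]
  -- the generators in d-coordinates
  have hA1' : A 0 = d 0 + Complex.I • d 1 := by rw [hA1, tsmul, tsmul, one_smul]
  have hA2' : A 1 = d 2 + Complex.I • d 5 := by rw [hA2, tsmul, tsmul, one_smul]
  have hA3' : A 2 = d 4 + Complex.I • d 3 := by rw [hA3, tsmul, tsmul, one_smul]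
  have hB1' : B 0 = (-2 * Complex.I) • d 6 := by rw [hB1, tsmul]
  have hB2' : B 1 = (-2 * Complex.I) • d 7 := by rw [hB2, tsmul]
  have hσtd : ∀ (z : ℂ) (i : Fin 8), σ (z • d i) = (starRingEnd ℂ z) • d i := by
    intro z i
    rw [← tsmul, hσ, tsmul]
  have sA1 : σ (A 0) = d 0 - Complex.I • d 1 := by
    rw [hA1', ← one_smul ℂ (d 0), map_add, hσtd, hσtd]
    simp [Complex.conj_I, sub_eq_add_neg]
  have sA2 : σ (A 1) = d 2 - Complex.I • d 5 := by
    rw [hA2', ← one_smul ℂ (d 2), map_add, hσtd, hσtd]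
    simp [Complex.conj_I, sub_eq_add_neg]
  have sA3 : σ (A 2) = d 4 - Complex.I • d 3 := by
    rw [hA3', ← one_smul ℂ (d 4), map_add, hσtd, hσtd]
    simp [Complex.conj_I, sub_eq_add_neg]
  -- conjugation properties
  have hσσ : ∀ x : ℂ ⊗[ℝ] L, σ (σ x) = x := by
    intro x
    induction x using TensorProduct.induction_on with
    | zero => simp
    | tmul z v => rw [hσ, hσ, Complex.conj_conj]
    | add x y hx hy => rw [map_add, map_add, hx, hy]
  have hσsmul : ∀ (z : ℂ) (x : ℂ ⊗[ℝ] L), σ (z • x) = (starRingEnd ℂ z) • σ x := by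
    intro z x
    induction x using TensorProduct.induction_on with
    | zero => simp
    | tmul w v =>
        rw [TensorProduct.smul_tmul', smul_eq_mul, hσ, hσ, map_mul,
          TensorProduct.smul_tmul', smul_eq_mul]
    | add x y hx hy => rw [smul_add, map_add, map_add, hx, hy, smul_add]
  -- centrality of d 6 and d 7
  have hb6 : ∀ v : L, ⁅b 6, v⁆ = 0 := by
    have h6 : LieAlgebra.ad ℝ L (b 6) = 0 := by
      refine b.ext fun i => ?_
      have : ⁅b 6, b i⁆ = 0 := by fin_cases i <;> exact hz 6 _ (by decide)
      simpa [LieAlgebra.ad_apply] using this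
    intro v
    simpa [LieAlgebra.ad_apply] using DFunLike.congr_fun h6 v
  have hb7 : ∀ v : L, ⁅b 7, v⁆ = 0 := by
    have h7 : LieAlgebra.ad ℝ L (b 7) = 0 := by
      refine b.ext fun i => ?_
      have : ⁅b 7, b i⁆ = 0 := by fin_cases i <;> exact hz 7 _ (by decide)
      simpa [LieAlgebra.ad_apply] using this
    intro v
    simpa [LieAlgebra.ad_apply] using DFunLike.congr_fun h7 v
  have hc6 : ∀ x : ℂ ⊗[ℝ] L, ⁅d 6, x⁆ = 0 := by
    intro x
    induction x using TensorProduct.induction_on with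
    | zero => rw [lzero]
    | tmul z v =>
        rw [hdap, LieAlgebra.ExtendScalars.bracket_tmul, hb6, TensorProduct.tmul_zero]
    | add x y hx hy => rw [ladd, hx, hy, add_zero]
  have hc7 : ∀ x : ℂ ⊗[ℝ] L, ⁅d 7, x⁆ = 0 := by
    intro x
    induction x using TensorProduct.induction_on with
    | zero => rw [lzero]
    | tmul z v =>
        rw [hdap, LieAlgebra.ExtendScalars.bracket_tmul, hb7, TensorProduct.tmul_zero]
    | add x y hx hy => rw [ladd, hx, hy, add_zero]
  have hBl : ∀ (k : Fin 2) (x : ℂ ⊗[ℝ] L), ⁅B k, x⁆ = 0 := by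
    intro k x
    fin_cases k
    · show ⁅B 0, x⁆ = 0
      rw [hB1', smull, hc6, smul_zero]
    · show ⁅B 1, x⁆ = 0
      rw [hB2', smull, hc7, smul_zero]
  have hBr : ∀ (k : Fin 2) (x : ℂ ⊗[ℝ] L), ⁅x, B k⁆ = 0 := by
    intro k x
    rw [lskew, hBl, neg_zero]
  -- zero structure brackets we need
  have z02 : ⁅d 0, d 2⁆ = 0 := hdz 0 2 (hz 0 2 (by decide))
  have z05 : ⁅d 0, d 5⁆ = 0 := hdz 0 5 (hz 0 5 (by decide))
  have z12 : ⁅d 1, d 2⁆ = 0 := hdz 1 2 (hz 1 2 (by decide))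
  have z15 : ⁅d 1, d 5⁆ = 0 := hdz 1 5 (hz 1 5 (by decide))
  have z04 : ⁅d 0, d 4⁆ = 0 := hdz 0 4 (hz 0 4 (by decide))
  have z03 : ⁅d 0, d 3⁆ = 0 := hdz 0 3 (hz 0 3 (by decide))
  have z14 : ⁅d 1, d 4⁆ = 0 := hdz 1 4 (hz 1 4 (by decide))
  have z13 : ⁅d 1, d 3⁆ = 0 := hdz 1 3 (hz 1 3 (by decide))
  have z24 : ⁅d 2, d 4⁆ = 0 := hdz 2 4 (hz 2 4 (by decide))
  have z53 : ⁅d 5, d 3⁆ = 0 := hdz 5 3 (hz 5 3 (by decide))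
  have z20 : ⁅d 2, d 0⁆ = 0 := hdz 2 0 (hz 2 0 (by decide))
  have z21 : ⁅d 2, d 1⁆ = 0 := hdz 2 1 (hz 2 1 (by decide))
  have z50 : ⁅d 5, d 0⁆ = 0 := hdz 5 0 (hz 5 0 (by decide))
  have z51 : ⁅d 5, d 1⁆ = 0 := hdz 5 1 (hz 5 1 (by decide))
  have z40 : ⁅d 4, d 0⁆ = 0 := hdz 4 0 (hz 4 0 (by decide))
  have z41 : ⁅d 4, d 1⁆ = 0 := hdz 4 1 (hz 4 1 (by decide))
  have z30 : ⁅d 3, d 0⁆ = 0 := hdz 3 0 (hz 3 0 (by decide))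
  have z31 : ⁅d 3, d 1⁆ = 0 := hdz 3 1 (hz 3 1 (by decide))
  have z42 : ⁅d 4, d 2⁆ = 0 := hdz 4 2 (hz 4 2 (by decide))
  have z35 : ⁅d 3, d 5⁆ = 0 := hdz 3 5 (hz 3 5 (by decide))
  have z25 : ⁅d 2, d 5⁆ = 0 := hdz 2 5 (hz 2 5 (by decide))
  have z52 : ⁅d 5, d 2⁆ = 0 := hdz 5 2 (hz 5 2 (by decide))
  -- brackets among the A's vanish
  have hAA : ∀ i j : Fin 3, ⁅A i, A j⁆ = 0 := by
    have h01 : ⁅A 0, A 1⁆ = 0 := by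
      rw [hA1', hA2']
      simp only [ladd, addl, lsub, subl, lsmul, smull, z02, z05, z12, z15,
        smul_zero, smul_neg, smul_smul, add_zero, zero_add, sub_zero, zero_sub,
        neg_zero, sub_self, neg_neg, add_neg_cancel, neg_add_cancel]
      all_goals module
    have h02 : ⁅A 0, A 2⁆ = 0 := by
      rw [hA1', hA3']
      simp only [ladd, addl, lsub, subl, lsmul, smull, z04, z03, z14, z13,
        smul_zero, smul_neg, smul_smul, add_zero, zero_add, sub_zero, zero_sub,
        neg_zero, sub_self, neg_neg, add_neg_cancel, neg_add_cancel]
      all_goals module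
    have h12 : ⁅A 1, A 2⁆ = 0 := by
      rw [hA2', hA3']
      simp only [ladd, addl, lsub, subl, lsmul, smull, z24, hd23, z53, hd54,
        smul_zero, smul_neg, smul_smul, add_zero, zero_add, sub_zero, zero_sub,
        neg_zero, sub_self, neg_neg, add_neg_cancel, neg_add_cancel]
      all_goals module
    intro i j
    fin_cases i <;> fin_cases j
    · exact lself _
    · exact h01
    · exact h02
    · show ⁅A 1, A 0⁆ = 0
      rw [lskew, h01, neg_zero]
    · exact lself _
    · exact h12
    · show ⁅A 2, A 0⁆ = 0
      rw [lskew, h02, neg_zero]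
    · show ⁅A 2, A 1⁆ = 0
      rw [lskew, h12, neg_zero]
    · exact lself _
  have hSS : ∀ i j : Fin 3, ⁅σ (A i), σ (A j)⁆ = 0 := by
    have h01 : ⁅σ (A 0), σ (A 1)⁆ = 0 := by
      rw [sA1, sA2]
      simp only [ladd, addl, lsub, subl, lsmul, smull, z02, z05, z12, z15,
        smul_zero, smul_neg, smul_smul, add_zero, zero_add, sub_zero, zero_sub,
        neg_zero, sub_self, neg_neg, add_neg_cancel, neg_add_cancel]
      all_goals module
    have h02 : ⁅σ (A 0), σ (A 2)⁆ = 0 := by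
      rw [sA1, sA3]
      simp only [ladd, addl, lsub, subl, lsmul, smull, z04, z03, z14, z13,
        smul_zero, smul_neg, smul_smul, add_zero, zero_add, sub_zero, zero_sub,
        neg_zero, sub_self, neg_neg, add_neg_cancel, neg_add_cancel]
      all_goals module
    have h12 : ⁅σ (A 1), σ (A 2)⁆ = 0 := by
      rw [sA2, sA3]
      simp only [ladd, addl, lsub, subl, lsmul, smull, z24, hd23, z53, hd54,
        smul_zero, smul_neg, smul_smul, add_zero, zero_add, sub_zero, zero_sub,
        neg_zero, sub_self, neg_neg, add_neg_cancel, neg_add_cancel]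
      all_goals module
    intro i j
    fin_cases i <;> fin_cases j
    · exact lself _
    · exact h01
    · exact h02
    · show ⁅σ (A 1), σ (A 0)⁆ = 0
      rw [lskew, h01, neg_zero]
    · exact lself _
    · exact h12
    · show ⁅σ (A 2), σ (A 0)⁆ = 0
      rw [lskew, h02, neg_zero]
    · show ⁅σ (A 2), σ (A 1)⁆ = 0
      rw [lskew, h12, neg_zero]
    · exact lself _
  -- mixed brackets land in span {B 0, B 1}
  have hB0mem : B 0 ∈ Submodule.span ℂ ({B 0, B 1} : Set (ℂ ⊗[ℝ] L)) :=
    Submodule.subset_span (by simp)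
  have hB1mem : B 1 ∈ Submodule.span ℂ ({B 0, B 1} : Set (ℂ ⊗[ℝ] L)) :=
    Submodule.subset_span (by simp)
  have hAS : ∀ i j : Fin 3, ⁅A i, σ (A j)⁆ ∈ Submodule.span ℂ ({B 0, B 1} : Set (ℂ ⊗[ℝ] L)) := by
    have e00 : ⁅A 0, σ (A 0)⁆ = B 0 := by
      rw [sA1, hA1', hB1']
      simp only [ladd, addl, lsub, subl, lsmul, smull, lself, hd01, hd10,
        smul_zero, smul_neg, smul_smul, add_zero, zero_add, sub_zero, zero_sub,
        neg_zero, sub_self, neg_neg, add_neg_cancel, neg_add_cancel]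
      all_goals module
    have e01 : ⁅A 0, σ (A 1)⁆ = 0 := by
      rw [sA2, hA1']
      simp only [ladd, addl, lsub, subl, lsmul, smull, z02, z05, z12, z15,
        smul_zero, smul_neg, smul_smul, add_zero, zero_add, sub_zero, zero_sub,
        neg_zero, sub_self, neg_neg, add_neg_cancel, neg_add_cancel]
      all_goals module
    have e02 : ⁅A 0, σ (A 2)⁆ = 0 := by
      rw [sA3, hA1']
      simp only [ladd, addl, lsub, subl, lsmul, smull, z04, z03, z14, z13,
        smul_zero, smul_neg, smul_smul, add_zero, zero_add, sub_zero, zero_sub,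
        neg_zero, sub_self, neg_neg, add_neg_cancel, neg_add_cancel]
      all_goals module
    have e10 : ⁅A 1, σ (A 0)⁆ = 0 := by
      rw [sA1, hA2']
      simp only [ladd, addl, lsub, subl, lsmul, smull, z20, z21, z50, z51,
        smul_zero, smul_neg, smul_smul, add_zero, zero_add, sub_zero, zero_sub,
        neg_zero, sub_self, neg_neg, add_neg_cancel, neg_add_cancel]
      all_goals module
    have e11 : ⁅A 1, σ (A 1)⁆ = 0 := by
      rw [sA2, hA2']
      simp only [ladd, addl, lsub, subl, lsmul, smull, lself, z25, z52,
        smul_zero, smul_neg, smul_smul, add_zero, zero_add, sub_zero, zero_sub,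
        neg_zero, sub_self, neg_neg, add_neg_cancel, neg_add_cancel]
      all_goals module
    have e12 : ⁅A 1, σ (A 2)⁆ = B 1 := by
      rw [sA3, hA2', hB2']
      simp only [ladd, addl, lsub, subl, lsmul, smull, z24, hd23, z53, hd54,
        smul_zero, smul_neg, smul_smul, add_zero, zero_add, sub_zero, zero_sub,
        neg_zero, sub_self, neg_neg, add_neg_cancel, neg_add_cancel]
      all_goals module
    have e20 : ⁅A 2, σ (A 0)⁆ = 0 := by
      rw [sA1, hA3']
      simp only [ladd, addl, lsub, subl, lsmul, smull, z40, z41, z30, z31,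
        smul_zero, smul_neg, smul_smul, add_zero, zero_add, sub_zero, zero_sub,
        neg_zero, sub_self, neg_neg, add_neg_cancel, neg_add_cancel]
      all_goals module
    have e21 : ⁅A 2, σ (A 1)⁆ = B 1 := by
      rw [sA2, hA3', hB2']
      simp only [ladd, addl, lsub, subl, lsmul, smull, z42, hd45, hd32, z35,
        smul_zero, smul_neg, smul_smul, add_zero, zero_add, sub_zero, zero_sub,
        neg_zero, sub_self, neg_neg, add_neg_cancel, neg_add_cancel]
      all_goals module
    have e22 : ⁅A 2, σ (A 2)⁆ = -B 0 := by
      rw [sA3, hA3', hB1']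
      simp only [ladd, addl, lsub, subl, lsmul, smull, lself, hd43, hd34,
        smul_zero, smul_neg, smul_smul, add_zero, zero_add, sub_zero, zero_sub,
        neg_zero, sub_self, neg_neg, add_neg_cancel, neg_add_cancel]
      all_goals module
    intro i j
    fin_cases i <;> fin_cases j
    · show ⁅A 0, σ (A 0)⁆ ∈ _; rw [e00]; exact hB0mem
    · show ⁅A 0, σ (A 1)⁆ ∈ _; rw [e01]; exact Submodule.zero_mem _
    · show ⁅A 0, σ (A 2)⁆ ∈ _; rw [e02]; exact Submodule.zero_mem _
    · show ⁅A 1, σ (A 0)⁆ ∈ _; rw [e10]; exact Submodule.zero_mem _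
    · show ⁅A 1, σ (A 1)⁆ ∈ _; rw [e11]; exact Submodule.zero_mem _
    · show ⁅A 1, σ (A 2)⁆ ∈ _; rw [e12]; exact hB1mem
    · show ⁅A 2, σ (A 0)⁆ ∈ _; rw [e20]; exact Submodule.zero_mem _
    · show ⁅A 2, σ (A 1)⁆ ∈ _; rw [e21]; exact hB1mem
    · show ⁅A 2, σ (A 2)⁆ ∈ _; rw [e22]; exact (Submodule.span ℂ _).neg_mem hB0mem
  have hSA : ∀ i j : Fin 3,
      ⁅σ (A j), A i⁆ ∈ Submodule.span ℂ ({B 0, B 1} : Set (ℂ ⊗[ℝ] L)) := by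
    intro i j
    rw [lskew]
    exact (Submodule.span ℂ _).neg_mem (hAS i j)
  -- generic span-to-span bracket lemma
  have key : ∀ (S T : Set (ℂ ⊗[ℝ] L)) (U : Submodule ℂ (ℂ ⊗[ℝ] L)),
      (∀ x ∈ S, ∀ y ∈ T, ⁅x, y⁆ ∈ U) →
      ∀ x ∈ Submodule.span ℂ S, ∀ y ∈ Submodule.span ℂ T, ⁅x, y⁆ ∈ U := by
    intro S T U h x hx y hy
    induction hx using Submodule.span_induction with
    | mem w hw =>
        induction hy using Submodule.span_induction with
        | mem z hzz => exact h w hw z hzz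
        | zero => rw [lzero]; exact U.zero_mem
        | add a c _ _ ha hc => rw [ladd]; exact U.add_mem ha hc
        | smul t a _ ha => rw [lsmul]; exact U.smul_mem t ha
    | zero => rw [zerol]; exact U.zero_mem
    | add a c _ _ ha hc => rw [addl]; exact U.add_mem ha hc
    | smul t a _ ha => rw [smull]; exact U.smul_mem t ha
  -- the combined family
  set c : Fin 8 → ℂ ⊗[ℝ] L :=
    ![A 0, A 1, A 2, σ (A 0), σ (A 1), σ (A 2), B 0, B 1] with hc
  set f : Fin 8 → ℤ × ℤ :=
    ![(-1, 0), (-1, 0), (-1, 0), (0, -1), (0, -1), (0, -1), (-1, -1), (-1, -1)] with hf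
  have hcmem : ∀ i : Fin 8, c i ∈ n (f i) := by
    intro i
    have m1 : ∀ k : Fin 3, A k ∈ n (-1, 0) := by
      intro k
      rw [hn1]
      fin_cases k <;> exact Submodule.subset_span (by simp)
    have m2 : ∀ k : Fin 3, σ (A k) ∈ n (0, -1) := by
      intro k
      rw [hn2]
      fin_cases k <;> exact Submodule.subset_span (by simp)
    have m3 : ∀ k : Fin 2, B k ∈ n (-1, -1) := by
      intro k
      rw [hn3]
      fin_cases k <;> exact Submodule.subset_span (by simp)
    fin_cases i
    · exact m1 0
    · exact m1 1
    · exact m1 2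
    · exact m2 0
    · exact m2 1
    · exact m2 2
    · exact m3 0
    · exact m3 1
  -- spanning
  have hdc : ∀ i : Fin 8, d i ∈ Submodule.span ℂ (Set.range c) := by
    have mem : ∀ i : Fin 8, c i ∈ Submodule.span ℂ (Set.range c) := fun i =>
      Submodule.subset_span ⟨i, rfl⟩
    intro i
    fin_cases i
    · show d 0 ∈ Submodule.span ℂ (Set.range c)
      have : d 0 = (2⁻¹ : ℂ) • c 0 + (2⁻¹ : ℂ) • c 3 := by
        show d 0 = (2⁻¹ : ℂ) • A 0 + (2⁻¹ : ℂ) • σ (A 0)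
        rw [sA1, hA1']; match_scalars <;> simp [Complex.ext_iff] <;> try norm_num
      rw [this]; exact add_mem (Submodule.smul_mem _ _ (mem 0)) (Submodule.smul_mem _ _ (mem 3))
    · show d 1 ∈ Submodule.span ℂ (Set.range c)
      have : d 1 = (-(Complex.I/2)) • c 0 + (Complex.I/2) • c 3 := by
        show d 1 = (-(Complex.I/2)) • A 0 + (Complex.I/2) • σ (A 0)
        rw [sA1, hA1']; match_scalars <;> simp [Complex.ext_iff] <;> try norm_num
      rw [this]; exact add_mem (Submodule.smul_mem _ _ (mem 0)) (Submodule.smul_mem _ _ (mem 3))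
    · show d 2 ∈ Submodule.span ℂ (Set.range c)
      have : d 2 = (2⁻¹ : ℂ) • c 1 + (2⁻¹ : ℂ) • c 4 := by
        show d 2 = (2⁻¹ : ℂ) • A 1 + (2⁻¹ : ℂ) • σ (A 1)
        rw [sA2, hA2']; match_scalars <;> simp [Complex.ext_iff] <;> try norm_num
      rw [this]; exact add_mem (Submodule.smul_mem _ _ (mem 1)) (Submodule.smul_mem _ _ (mem 4))
    · show d 3 ∈ Submodule.span ℂ (Set.range c)
      have : d 3 = (-(Complex.I/2)) • c 2 + (Complex.I/2) • c 5 := by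
        show d 3 = (-(Complex.I/2)) • A 2 + (Complex.I/2) • σ (A 2)
        rw [sA3, hA3']; match_scalars <;> simp [Complex.ext_iff] <;> try norm_num
      rw [this]; exact add_mem (Submodule.smul_mem _ _ (mem 2)) (Submodule.smul_mem _ _ (mem 5))
    · show d 4 ∈ Submodule.span ℂ (Set.range c)
      have : d 4 = (2⁻¹ : ℂ) • c 2 + (2⁻¹ : ℂ) • c 5 := by
        show d 4 = (2⁻¹ : ℂ) • A 2 + (2⁻¹ : ℂ) • σ (A 2)
        rw [sA3, hA3']; match_scalars <;> simp [Complex.ext_iff] <;> try norm_num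
      rw [this]; exact add_mem (Submodule.smul_mem _ _ (mem 2)) (Submodule.smul_mem _ _ (mem 5))
    · show d 5 ∈ Submodule.span ℂ (Set.range c)
      have : d 5 = (-(Complex.I/2)) • c 1 + (Complex.I/2) • c 4 := by
        show d 5 = (-(Complex.I/2)) • A 1 + (Complex.I/2) • σ (A 1)
        rw [sA2, hA2']; match_scalars <;> simp [Complex.ext_iff] <;> try norm_num
      rw [this]; exact add_mem (Submodule.smul_mem _ _ (mem 1)) (Submodule.smul_mem _ _ (mem 4))
    · show d 6 ∈ Submodule.span ℂ (Set.range c)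
      have : d 6 = (Complex.I/2) • c 6 := by
        show d 6 = (Complex.I/2) • B 0
        rw [hB1', smul_smul]; match_scalars <;> simp [Complex.ext_iff] <;> try norm_num
      rw [this]; exact Submodule.smul_mem _ _ (mem 6)
    · show d 7 ∈ Submodule.span ℂ (Set.range c)
      have : d 7 = (Complex.I/2) • c 7 := by
        show d 7 = (Complex.I/2) • B 1
        rw [hB2', smul_smul]; match_scalars <;> simp [Complex.ext_iff] <;> try norm_num
      rw [this]; exact Submodule.smul_mem _ _ (mem 7)
  have htop : ⊤ ≤ Submodule.span ℂ (Set.range c) := by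
    rw [← d.span_eq]
    refine Submodule.span_le.mpr ?_
    rintro _ ⟨i, rfl⟩
    exact hdc i
  have hcard : Fintype.card (Fin 8) = Module.finrank ℂ (ℂ ⊗[ℝ] L) := by
    rw [Module.finrank_eq_card_basis d]
  have hlin : LinearIndependent ℂ c :=
    linearIndependent_of_top_le_span_of_card_eq_finrank htop hcard
  -- description of n via c and f
  have hnf : ∀ pq : ℤ × ℤ, n pq = Submodule.span ℂ (c '' (f ⁻¹' {pq})) := by
    intro pq
    by_cases hpq : pq ∈ ({(-1, 0), (0, -1), (-1, -1)} : Set (ℤ × ℤ))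
    · simp only [Set.mem_insert_iff, Set.mem_singleton_iff] at hpq
      rcases hpq with rfl | rfl | rfl
      · have hpre : f ⁻¹' {((-1 : ℤ), (0 : ℤ))} = {0, 1, 2} := by
          ext i; fin_cases i <;> simp [hf] <;> decide
        rw [hpre, Set.image_insert_eq, Set.image_insert_eq, Set.image_singleton, hn1]
        rfl
      · have hpre : f ⁻¹' {((0 : ℤ), (-1 : ℤ))} = {3, 4, 5} := by
          ext i; fin_cases i <;> simp [hf] <;> decide
        rw [hpre, Set.image_insert_eq, Set.image_insert_eq, Set.image_singleton, hn2]
        rfl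
      · have hpre : f ⁻¹' {((-1 : ℤ), (-1 : ℤ))} = {6, 7} := by
          ext i; fin_cases i <;> simp [hf] <;> decide
        rw [hpre, Set.image_insert_eq, Set.image_singleton, hn3]
        rfl
    · have hpre : f ⁻¹' {pq} = ∅ := by
        ext i
        simp only [Set.mem_preimage, Set.mem_singleton_iff, Set.mem_empty_iff_false,
          iff_false]
        intro hfi
        apply hpq
        rw [← hfi]
        fin_cases i <;> simp [hf] <;> decide
      rw [hpre, Set.image_empty, Submodule.span_empty, hn0 pq hpq]
  -- internality
  have hinternal : DirectSum.IsInternal n := by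
    rw [DirectSum.isInternal_submodule_iff_iSupIndep_and_iSup_eq_top]
    constructor
    · rw [iSupIndep_def]
      intro pq
      have hle1 : n pq ≤ Submodule.span ℂ (c '' (f ⁻¹' {pq})) := (hnf pq).le
      have hle2 : (⨆ (q') (_ : q' ≠ pq), n q') ≤
          Submodule.span ℂ (c '' (f ⁻¹' {pq})ᶜ) := by
        refine iSup₂_le fun q' hq' => ?_
        rw [hnf q']
        refine Submodule.span_mono (Set.image_mono ?_)
        intro i hi
        simp only [Set.mem_preimage, Set.mem_singleton_iff] at hi
        simp only [Set.mem_compl_iff, Set.mem_preimage, Set.mem_singleton_iff]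
        rw [hi]; exact hq'
      exact (hlin.disjoint_span_image disjoint_compl_right).mono hle1 hle2
    · refine top_unique (htop.trans ?_)
      refine Submodule.span_le.mpr ?_
      rintro _ ⟨i, rfl⟩
      exact Submodule.mem_iSup_of_mem (f i) (hcmem i)
  refine ⟨hinternal, ?_, ?_⟩
  · -- grading
    intro p q r s x hx y hy
    by_cases hpq : ((p, q) : ℤ × ℤ) ∈ ({(-1, 0), (0, -1), (-1, -1)} : Set (ℤ × ℤ))
    swap
    · rw [hn0 _ hpq, Submodule.mem_bot] at hx
      rw [hx, zerol]
      exact Submodule.zero_mem _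
    by_cases hrs : ((r, s) : ℤ × ℤ) ∈ ({(-1, 0), (0, -1), (-1, -1)} : Set (ℤ × ℤ)) 
    swap
    · rw [hn0 _ hrs, Submodule.mem_bot] at hy
      rw [hy, lzero]
      exact Submodule.zero_mem _
    simp only [Set.mem_insert_iff, Set.mem_singleton_iff, Prod.ext_iff] at hpq hrs
    rcases hpq with ⟨rfl, rfl⟩ | ⟨rfl, rfl⟩ | ⟨rfl, rfl⟩ <;>
      rcases hrs with ⟨rfl, rfl⟩ | ⟨rfl, rfl⟩ | ⟨rfl, rfl⟩
    · -- (-1,0)+(-1,0)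
      rw [hn1] at hx hy
      rw [show ((-1 : ℤ) + -1, (0 : ℤ) + 0) = ((-2 : ℤ), (0 : ℤ)) by norm_num,
        hn0 (-2, 0) (by norm_num)]
      refine key _ _ _ ?_ x hx y hy
      intro a ha b hb
      simp only [Set.mem_insert_iff, Set.mem_singleton_iff] at ha hb
      rw [Submodule.mem_bot]
      rcases ha with rfl | rfl | rfl <;> rcases hb with rfl | rfl | rfl <;>
        simp only [hAA]
    · -- (-1,0)+(0,-1)
      rw [hn1] at hx; rw [hn2] at hy
      rw [show ((-1 : ℤ) + 0, (0 : ℤ) + -1) = ((-1 : ℤ), (-1 : ℤ)) by norm_num, hn3]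
      refine key _ _ _ ?_ x hx y hy
      intro a ha b hb
      simp only [Set.mem_insert_iff, Set.mem_singleton_iff] at ha hb
      rcases ha with rfl | rfl | rfl <;> rcases hb with rfl | rfl | rfl <;>
        exact hAS _ _
    · -- (-1,0)+(-1,-1)
      rw [hn1] at hx; rw [hn3] at hy
      rw [show ((-1 : ℤ) + -1, (0 : ℤ) + -1) = ((-2 : ℤ), (-1 : ℤ)) by norm_num,
        hn0 (-2, -1) (by norm_num)]
      refine key _ _ _ ?_ x hx y hy
      intro a ha b hb
      simp only [Set.mem_insert_iff, Set.mem_singleton_iff] at hb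
      rw [Submodule.mem_bot]
      rcases hb with rfl | rfl <;> rw [hBr]
    · -- (0,-1)+(-1,0)
      rw [hn2] at hx; rw [hn1] at hy
      rw [show ((0 : ℤ) + -1, (-1 : ℤ) + 0) = ((-1 : ℤ), (-1 : ℤ)) by norm_num, hn3]
      refine key _ _ _ ?_ x hx y hy
      intro a ha b hb
      simp only [Set.mem_insert_iff, Set.mem_singleton_iff] at ha hb
      rcases ha with rfl | rfl | rfl <;> rcases hb with rfl | rfl | rfl <;>
        exact hSA _ _
    · -- (0,-1)+(0,-1)
      rw [hn2] at hx hy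
      rw [show ((0 : ℤ) + 0, (-1 : ℤ) + -1) = ((0 : ℤ), (-2 : ℤ)) by norm_num,
        hn0 (0, -2) (by norm_num)]
      refine key _ _ _ ?_ x hx y hy
      intro a ha b hb
      simp only [Set.mem_insert_iff, Set.mem_singleton_iff] at ha hb
      rw [Submodule.mem_bot]
      rcases ha with rfl | rfl | rfl <;> rcases hb with rfl | rfl | rfl <;>
        simp only [hSS]
    · -- (0,-1)+(-1,-1)
      rw [hn2] at hx; rw [hn3] at hy
      rw [show ((0 : ℤ) + -1, (-1 : ℤ) + -1) = ((-1 : ℤ), (-2 : ℤ)) by norm_num,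
        hn0 (-1, -2) (by norm_num)]
      refine key _ _ _ ?_ x hx y hy
      intro a ha b hb
      simp only [Set.mem_insert_iff, Set.mem_singleton_iff] at hb
      rw [Submodule.mem_bot]
      rcases hb with rfl | rfl <;> rw [hBr]
    · -- (-1,-1)+(-1,0)
      rw [hn3] at hx; rw [hn1] at hy
      rw [show ((-1 : ℤ) + -1, (-1 : ℤ) + 0) = ((-2 : ℤ), (-1 : ℤ)) by norm_num,
        hn0 (-2, -1) (by norm_num)]
      refine key _ _ _ ?_ x hx y hy
      intro a ha b hb
      simp only [Set.mem_insert_iff, Set.mem_singleton_iff] at ha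
      rw [Submodule.mem_bot]
      rcases ha with rfl | rfl <;> rw [hBl]
    · -- (-1,-1)+(0,-1)
      rw [hn3] at hx; rw [hn2] at hy
      rw [show ((-1 : ℤ) + 0, (-1 : ℤ) + -1) = ((-1 : ℤ), (-2 : ℤ)) by norm_num,
        hn0 (-1, -2) (by norm_num)]
      refine key _ _ _ ?_ x hx y hy
      intro a ha b hb
      simp only [Set.mem_insert_iff, Set.mem_singleton_iff] at ha
      rw [Submodule.mem_bot]
      rcases ha with rfl | rfl <;> rw [hBl]
    · -- (-1,-1)+(-1,-1)
      rw [hn3] at hx hy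
      rw [show ((-1 : ℤ) + -1, (-1 : ℤ) + -1) = ((-2 : ℤ), (-2 : ℤ)) by norm_num,
        hn0 (-2, -2) (by norm_num)]
      refine key _ _ _ ?_ x hx y hy
      intro a ha b hb
      simp only [Set.mem_insert_iff, Set.mem_singleton_iff] at ha
      rw [Submodule.mem_bot]
      rcases ha with rfl | rfl <;> rw [hBl]
  · -- conjugation symmetry
    have hsub : ∀ p q : ℤ, σ '' (n (p, q) : Set (ℂ ⊗[ℝ] L)) ⊆ (n (q, p) : Set (ℂ ⊗[ℝ] L)) := by
      intro p q
      rintro _ ⟨x, hx, rfl⟩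
      by_cases hpq : ((p, q) : ℤ × ℤ) ∈ ({(-1, 0), (0, -1), (-1, -1)} : Set (ℤ × ℤ))
      swap
      · rw [SetLike.mem_coe, hn0 _ hpq, Submodule.mem_bot] at hx
        rw [hx, map_zero]
        exact (n (q, p)).zero_mem
      have hmain : ∀ (S T : Set (ℂ ⊗[ℝ] L)) (x : ℂ ⊗[ℝ] L),
          (∀ a ∈ S, σ a ∈ Submodule.span ℂ T) →
          x ∈ Submodule.span ℂ S → σ x ∈ Submodule.span ℂ T := by
        intro S T x hgen hx
        induction hx using Submodule.span_induction with
        | mem a ha => exact hgen a ha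
        | zero => rw [map_zero]; exact Submodule.zero_mem _
        | add a c _ _ ha hc => rw [map_add]; exact Submodule.add_mem _ ha hc
        | smul t a _ ha =>
            rw [hσsmul]
            exact Submodule.smul_mem _ _ ha
      simp only [Set.mem_insert_iff, Set.mem_singleton_iff, Prod.ext_iff] at hpq
      rcases hpq with ⟨rfl, rfl⟩ | ⟨rfl, rfl⟩ | ⟨rfl, rfl⟩
      · rw [SetLike.mem_coe, hn1] at hx
        rw [SetLike.mem_coe, hn2]
        refine hmain _ _ x ?_ hx
        intro a ha
        simp only [Set.mem_insert_iff, Set.mem_singleton_iff] at ha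
        rcases ha with rfl | rfl | rfl <;> exact Submodule.subset_span (by simp)
      · rw [SetLike.mem_coe, hn2] at hx
        rw [SetLike.mem_coe, hn1]
        refine hmain _ _ x ?_ hx
        intro a ha
        simp only [Set.mem_insert_iff, Set.mem_singleton_iff] at ha
        rcases ha with rfl | rfl | rfl <;> rw [hσσ] <;>
          exact Submodule.subset_span (by simp)
      · rw [SetLike.mem_coe, hn3] at hx
        rw [SetLike.mem_coe, hn3]
        refine hmain _ _ x ?_ hx
        intro a ha
        have sB0 : σ (B 0) = -B 0 := by
          rw [hB1, hσ]
          rw [show (starRingEnd ℂ) (-2 * Complex.I) = -(-2 * Complex.I) by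
            simp [Complex.ext_iff]]
          rw [TensorProduct.neg_tmul]
        have sB1 : σ (B 1) = -B 1 := by
          rw [hB2, hσ]
          rw [show (starRingEnd ℂ) (-2 * Complex.I) = -(-2 * Complex.I) by
            simp [Complex.ext_iff]]
          rw [TensorProduct.neg_tmul]
        simp only [Set.mem_insert_iff, Set.mem_singleton_iff] at ha
        rcases ha with rfl | rfl
        · rw [sB0]
          exact Submodule.neg_mem _ (Submodule.subset_span (by simp))
        · rw [sB1]
          exact Submodule.neg_mem _ (Submodule.subset_span (by simp))
    intro p q
    refine Set.Subset.antisymm (hsub p q) ?_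
    intro x hx
    have h1 : σ x ∈ (n (p, q) : Set (ℂ ⊗[ℝ] L)) := hsub q p ⟨x, hx, rfl⟩
    exact ⟨σ x, h1, hσσ x⟩
end

section
/- Let N₅^{8,2} be the real Lie algebra given by structure constants on the basis x₁,…,x₈ with nonzero brackets ⁅x₁,x₂⁆ = x₇, ⁅x₃,x₄⁆ = x₇, ⁅x₅,x₆⁆ = x₇, ⁅x₄,x₅⁆ = x₈, ⁅x₂,x₃⁆ = x₈, and let 𝔫 = ℂ ⊗_ℝ N₅^{8,2} be its complexification with conjugation σ. Set A₁ = x₁ + i x₆, A₂ = x₃ + i(x₄ + x₆), A₃ = x₅ + i(x₂ + x₄ + x₆), B₁ = −2i x₇, B₂ = −2i x₈. Then the ℤ²-decomposition with 𝔫_{-1,0} = spanℂ{A₁,A₂,A₃}, 𝔫_{0,-1} = spanℂ{σ(A₁),σ(A₂),σ(A₃)}, 𝔫_{-1,-1} = spanℂ{B₁,B₂} and all other pieces zero is a grading, i.e. ⁅𝔫_{p,q}, 𝔫_{r,s}⁆ ⊆ 𝔫_{p+r,q+s} for all (p,q),(r,s), and σ(𝔫_{p,q}) = 𝔫_{q,p}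 for all (p,q). -/
open TensorProduct

set_option maxHeartbeats 2000000 in
/-- bigrading of the complexification of the real Lie algebra `N₅^{8,2}`
(basis `x₁,…,x₈` with `⁅x₁,x₂⁆=x₇, ⁅x₃,x₄⁆=x₇, ⁅x₅,x₆⁆=x₇, ⁅x₄,x₅⁆=x₈, ⁅x₂,x₃⁆=x₈`),
via `A₁ = x₁+ix₆, A₂ = x₃+i(x₄+x₆), A₃ = x₅+i(x₂+x₄+x₆), B₁ = −2ix₇, B₂ = −2ix₈`.
The basis is indexed by `Fin 8` with `b i` standing for `xᵢ₊₁`; `σ` is the conjugation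
of the complexification `ℂ ⊗[ℝ] L`. -/
theorem stmt14 {L : Type*} [LieRing L] [LieAlgebra ℝ L]
    (b : Module.Basis (Fin 8) ℝ L)
    (h1 : ⁅b 0, b 1⁆ = b 6) (h2 : ⁅b 2, b 3⁆ = b 6)
    (h3 : ⁅b 4, b 5⁆ = b 6) (h4 : ⁅b 3, b 4⁆ = b 7) (h5 : ⁅b 1, b 2⁆ = b 7)
    (h0 : ∀ i j : Fin 8, i < j →
      (i, j) ∉ ({(0, 1), (2, 3), (4, 5), (3, 4), (1, 2)} : Set (Fin 8 × Fin 8)) →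
      ⁅b i, b j⁆ = 0)
    (σ : (ℂ ⊗[ℝ] L) →ₗ[ℝ] (ℂ ⊗[ℝ] L))
    (hσ : ∀ (z : ℂ) (v : L), σ (z ⊗ₜ[ℝ] v) = (starRingEnd ℂ z) ⊗ₜ[ℝ] v)
    (A : Fin 3 → (ℂ ⊗[ℝ] L)) (B : Fin 2 → (ℂ ⊗[ℝ] L))
    (hA1 : A 0 = (1 : ℂ) ⊗ₜ[ℝ] b 0 + Complex.I ⊗ₜ[ℝ] b 5)
    (hA2 : A 1 = (1 : ℂ) ⊗ₜ[ℝ] b 2 + Complex.I ⊗ₜ[ℝ] (b 3 + b 5))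
    (hA3 : A 2 = (1 : ℂ) ⊗ₜ[ℝ] b 4 + Complex.I ⊗ₜ[ℝ] (b 1 + b 3 + b 5))
    (hB1 : B 0 = (-2 * Complex.I) ⊗ₜ[ℝ] b 6)
    (hB2 : B 1 = (-2 * Complex.I) ⊗ₜ[ℝ] b 7)
    (n : ℤ × ℤ → Submodule ℂ (ℂ ⊗[ℝ] L))
    (hn1 : n (-1, 0) = Submodule.span ℂ {A 0, A 1, A 2})
    (hn2 : n (0, -1) = Submodule.span ℂ {σ (A 0), σ (A 1), σ (A 2)})
    (hn3 : n (-1, -1) = Submodule.span ℂ {B 0, B 1})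
    (hn0 : ∀ pq : ℤ × ℤ, pq ∉ ({(-1, 0), (0, -1), (-1, -1)} : Set (ℤ × ℤ)) → n pq = ⊥) :
    DirectSum.IsInternal n ∧
    (∀ p q r s : ℤ, ∀ x ∈ n (p, q), ∀ y ∈ n (r, s), ⁅x, y⁆ ∈ n (p + r, q + s)) ∧
    (∀ p q : ℤ, σ '' (n (p, q) : Set (ℂ ⊗[ℝ] L)) = (n (q, p) : Set (ℂ ⊗[ℝ] L))) := by
  classical
  set I := Complex.I with hI
  set c : Module.Basis (Fin 8) ℂ (ℂ ⊗[ℝ] L) := b.baseChange ℂ with hcdef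
  have hc : ∀ i, c i = (1 : ℂ) ⊗ₜ[ℝ] b i := fun i => Module.Basis.baseChange_apply ℂ b i
  have htm : ∀ (z : ℂ) (i : Fin 8), z ⊗ₜ[ℝ] (b i) = z • c i := by
    intro z i
    rw [hc, smul_tmul', smul_eq_mul, mul_one]
  -- coordinates of the generators
  have eA0 : A 0 = c 0 + I • c 5 := by
    rw [hA1, htm, htm, one_smul]
  have eA1 : A 1 = c 2 + I • c 3 + I • c 5 := by
    rw [hA2, tmul_add, htm, htm, htm, one_smul, add_assoc]
  have eA2 : A 2 = c 4 + I • c 1 + I • c 3 + I • c 5 := by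
    rw [hA3, tmul_add, tmul_add, htm, htm, htm, htm, one_smul]
    abel
  have eB0 : B 0 = (-2 * I) • c 6 := by rw [hB1, htm]
  have eB1 : B 1 = (-2 * I) • c 7 := by rw [hB2, htm]
  -- sigma on basis vectors
  have hσ1 : ∀ i, σ (c i) = c i := by
    intro i; rw [hc, hσ, map_one]
  have hσI : ∀ i, σ (I • c i) = -(I • c i) := by
    intro i
    rw [← htm, hσ]
    rw [hI, Complex.conj_I, ← hI, neg_tmul, htm]
  -- sigma of the generators
  have eS0 : σ (A 0) = c 0 - I • c 5 := by
    rw [eA0, map_add, hσ1, hσI, sub_eq_add_neg]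
  have eS1 : σ (A 1) = c 2 - I • c 3 - I • c 5 := by
    rw [eA1, map_add, map_add, hσ1, hσI, hσI, sub_eq_add_neg, sub_eq_add_neg]
  have eS2 : σ (A 2) = c 4 - I • c 1 - I • c 3 - I • c 5 := by
    rw [eA2, map_add, map_add, map_add, hσ1, hσI, hσI, hσI,
      sub_eq_add_neg, sub_eq_add_neg, sub_eq_add_neg]
  -- sigma is conjugate-semilinear and involutive
  have hsm : ∀ (z : ℂ) (x : ℂ ⊗[ℝ] L), σ (z • x) = (starRingEnd ℂ z) • σ x := by
    intro z x
    induction x using TensorProduct.induction_on with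
    | zero => simp
    | tmul w v => rw [smul_tmul', smul_eq_mul, hσ, hσ, map_mul, smul_tmul', smul_eq_mul]
    | add x y hx hy => rw [smul_add, map_add, hx, hy, map_add, smul_add]
  have hinv : ∀ x, σ (σ x) = x := by
    intro x
    induction x using TensorProduct.induction_on with
    | zero => simp
    | tmul w v => rw [hσ, hσ, Complex.conj_conj]
    | add x y hx hy => rw [map_add, map_add, hx, hy]
  have smulL : ∀ (t : ℂ) (x y : ℂ ⊗[ℝ] L), ⁅t • x, y⁆ = t • ⁅x, y⁆ :=
    fun t x y => smul_lie t x y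
  have addL : ∀ (x y z : ℂ ⊗[ℝ] L), ⁅x + y, z⁆ = ⁅x, z⁆ + ⁅y, z⁆ :=
    fun x y z => add_lie x y z
  have lieAddL : ∀ (x y z : ℂ ⊗[ℝ] L), ⁅x, y + z⁆ = ⁅x, y⁆ + ⁅x, z⁆ :=
    fun x y z => lie_add x y z
  have subL : ∀ (x y z : ℂ ⊗[ℝ] L), ⁅x - y, z⁆ = ⁅x, z⁆ - ⁅y, z⁆ :=
    fun x y z => sub_lie x y z
  have lieSubL : ∀ (x y z : ℂ ⊗[ℝ] L), ⁅x, y - z⁆ = ⁅x, y⁆ - ⁅x, z⁆ :=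
    fun x y z => lie_sub x y z
  have selfL : ∀ x : ℂ ⊗[ℝ] L, ⁅x, x⁆ = 0 := fun x => lie_self x
  have lieZeroL : ∀ x : ℂ ⊗[ℝ] L, ⁅x, (0 : ℂ ⊗[ℝ] L)⁆ = 0 := fun x => lie_zero x
  have zeroLieL : ∀ x : ℂ ⊗[ℝ] L, ⁅(0 : ℂ ⊗[ℝ] L), x⁆ = 0 := fun x => zero_lie x
  have lieS : ∀ (t : ℂ) (x y : ℂ ⊗[ℝ] L), ⁅x, t • y⁆ = t • ⁅x, y⁆ :=
    fun t x y => lie_smul t x y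
  -- zero structure constants
  have zL : ∀ i j : Fin 8, i < j → (i,j) ≠ (0,1) → (i,j) ≠ (2,3) → (i,j) ≠ (4,5) →
      (i,j) ≠ (3,4) → (i,j) ≠ (1,2) → ⁅b i, b j⁆ = 0 := by
    intro i j hlt n1 n2 n3 n4 n5
    refine h0 i j hlt ?_
    simp only [Set.mem_insert_iff, Set.mem_singleton_iff]
    push_neg
    exact ⟨n1, n2, n3, n4, n5⟩
  have zz : ∀ i j : Fin 8, i < j → (i,j) ≠ (0,1) → (i,j) ≠ (2,3) → (i,j) ≠ (4,5) →
      (i,j) ≠ (3,4) → (i,j) ≠ (1,2) → ⁅b i, b j⁆ = 0 ∧ ⁅b j, b i⁆ = 0 := by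
    intro i j hlt n1 n2 n3 n4 n5
    have h := zL i j hlt n1 n2 n3 n4 n5
    exact ⟨h, by rw [← lie_skew, h, neg_zero]⟩
  obtain ⟨z02, z20⟩ := zz 0 2 (by decide) (by decide) (by decide) (by decide) (by decide) (by decide)
  obtain ⟨z03, z30⟩ := zz 0 3 (by decide) (by decide) (by decide) (by decide) (by decide) (by decide)
  obtain ⟨z04, z40⟩ := zz 0 4 (by decide) (by decide) (by decide) (by decide) (by decide) (by decide)
  obtain ⟨z05, z50⟩ := zz 0 5 (by decide) (by decide) (by decide) (by decide) (by decide) (by decide)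
  obtain ⟨z13, z31⟩ := zz 1 3 (by decide) (by decide) (by decide) (by decide) (by decide) (by decide)
  obtain ⟨z14, z41⟩ := zz 1 4 (by decide) (by decide) (by decide) (by decide) (by decide) (by decide)
  obtain ⟨z15, z51⟩ := zz 1 5 (by decide) (by decide) (by decide) (by decide) (by decide) (by decide)
  obtain ⟨z24, z42⟩ := zz 2 4 (by decide) (by decide) (by decide) (by decide) (by decide) (by decide)
  obtain ⟨z25, z52⟩ := zz 2 5 (by decide) (by decide) (by decide) (by decide) (by decide) (by decide)
  obtain ⟨z35, z53⟩ := zz 3 5 (by decide) (by decide) (by decide) (by decide) (by decide) (by decide)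
  have h1' : ⁅b 1, b 0⁆ = -b 6 := by rw [← lie_skew, h1]
  have h2' : ⁅b 3, b 2⁆ = -b 6 := by rw [← lie_skew, h2]
  have h3' : ⁅b 5, b 4⁆ = -b 6 := by rw [← lie_skew, h3]
  have h4' : ⁅b 4, b 3⁆ = -b 7 := by rw [← lie_skew, h4]
  have h5' : ⁅b 2, b 1⁆ = -b 7 := by rw [← lie_skew, h5]
  -- x7 and x8 are central
  have z6 : ∀ i : Fin 8, ⁅b i, b 6⁆ = 0 := by
    intro i
    fin_cases i
    · exact zL 0 6 (by decide) (by decide) (by decide) (by decide) (by decide) (by decide)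
    · exact zL 1 6 (by decide) (by decide) (by decide) (by decide) (by decide) (by decide)
    · exact zL 2 6 (by decide) (by decide) (by decide) (by decide) (by decide) (by decide)
    · exact zL 3 6 (by decide) (by decide) (by decide) (by decide) (by decide) (by decide)
    · exact zL 4 6 (by decide) (by decide) (by decide) (by decide) (by decide) (by decide)
    · exact zL 5 6 (by decide) (by decide) (by decide) (by decide) (by decide) (by decide)
    · exact lie_self _
    · exact (zz 6 7 (by decide) (by decide) (by decide) (by decide) (by decide) (by decide)).2
  have z7 : ∀ i : Fin 8, ⁅b i, b 7⁆ = 0 := by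
    intro i
    fin_cases i
    · exact zL 0 7 (by decide) (by decide) (by decide) (by decide) (by decide) (by decide)
    · exact zL 1 7 (by decide) (by decide) (by decide) (by decide) (by decide) (by decide)
    · exact zL 2 7 (by decide) (by decide) (by decide) (by decide) (by decide) (by decide)
    · exact zL 3 7 (by decide) (by decide) (by decide) (by decide) (by decide) (by decide)
    · exact zL 4 7 (by decide) (by decide) (by decide) (by decide) (by decide) (by decide)
    · exact zL 5 7 (by decide) (by decide) (by decide) (by decide) (by decide) (by decide)
    · exact zL 6 7 (by decide) (by decide) (by decide) (by decide) (by decide) (by decide)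
    · exact lie_self _
  have centL6 : ∀ v : L, ⁅v, b 6⁆ = 0 := by
    intro v
    have hv : v ∈ Submodule.span ℝ (Set.range b) := by rw [b.span_eq]; trivial
    induction hv using Submodule.span_induction with
    | mem x h => obtain ⟨i, rfl⟩ := h; exact z6 i
    | zero => exact zero_lie _
    | add x y _ _ hx hy => rw [add_lie, hx, hy, add_zero]
    | smul a x _ hx => rw [smul_lie, hx, smul_zero]
  have centL7 : ∀ v : L, ⁅v, b 7⁆ = 0 := by
    intro v
    have hv : v ∈ Submodule.span ℝ (Set.range b) := by rw [b.span_eq]; trivial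
    induction hv using Submodule.span_induction with
    | mem x h => obtain ⟨i, rfl⟩ := h; exact z7 i
    | zero => exact zero_lie _
    | add x y _ _ hx hy => rw [add_lie, hx, hy, add_zero]
    | smul a x _ hx => rw [smul_lie, hx, smul_zero]
  have cent6 : ∀ x : ℂ ⊗[ℝ] L, ⁅x, c 6⁆ = 0 := by
    intro x
    induction x using TensorProduct.induction_on with
    | zero => exact zero_lie _
    | tmul w v => rw [hc, LieAlgebra.ExtendScalars.bracket_tmul, centL6, tmul_zero]
    | add x y hx hy => rw [add_lie, hx, hy, add_zero]
  have cent7 : ∀ x : ℂ ⊗[ℝ] L, ⁅x, c 7⁆ = 0 := by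
    intro x
    induction x using TensorProduct.induction_on with
    | zero => exact zero_lie _
    | tmul w v => rw [hc, LieAlgebra.ExtendScalars.bracket_tmul, centL7, tmul_zero]
    | add x y hx hy => rw [add_lie, hx, hy, add_zero]
  have bxB0 : ∀ x : ℂ ⊗[ℝ] L, ⁅x, B 0⁆ = 0 := by
    intro x; rw [eB0, lieS, cent6, smul_zero]
  have bxB1 : ∀ x : ℂ ⊗[ℝ] L, ⁅x, B 1⁆ = 0 := by
    intro x; rw [eB1, lieS, cent7, smul_zero]
  have bxB0' : ∀ x : ℂ ⊗[ℝ] L, ⁅B 0, x⁆ = 0 := by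
    intro x; rw [← lie_skew, bxB0, neg_zero]
  have bxB1' : ∀ x : ℂ ⊗[ℝ] L, ⁅B 1, x⁆ = 0 := by
    intro x; rw [← lie_skew, bxB1, neg_zero]
  -- bracket of complexified basis vectors
  have hcc : ∀ i j : Fin 8, ⁅c i, c j⁆ = (1 : ℂ) ⊗ₜ[ℝ] ⁅b i, b j⁆ := by
    intro i j
    rw [hc, hc, LieAlgebra.ExtendScalars.bracket_tmul, one_mul]
  have c6' : (1 : ℂ) ⊗ₜ[ℝ] (b 6) = c 6 := (hc 6).symm
  have c7' : (1 : ℂ) ⊗ₜ[ℝ] (b 7) = c 7 := (hc 7).symm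
  -- generator brackets
  have bA01 : ⁅A 0, A 1⁆ = 0 := by
    rw [eA0, eA1]
    simp only [addL, lieAddL, smulL, lieS, hcc, z02, z03, z05, z52, z53, selfL, lie_self,
      tmul_zero, smul_zero, add_zero, zero_add]
  have bA02 : ⁅A 0, A 2⁆ = 0 := by
    rw [eA0, eA2]
    simp only [addL, lieAddL, smulL, lieS, hcc, z04, h1, z03, z05, h3', z51, z53,
      selfL, lie_self, tmul_zero, tmul_neg, smul_zero, add_zero, zero_add, smul_neg, c6']
    module
  have bA12 : ⁅A 1, A 2⁆ = 0 := by
    rw [eA1, eA2]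
    simp only [addL, lieAddL, smulL, lieS, hcc, z24, h5', h2, z25, h4, z31, z35, h3',
      z51, z53, selfL, lie_self, tmul_zero, tmul_neg, smul_zero, add_zero, zero_add, smul_neg, c6', c7']
    module
  have bS01 : ⁅σ (A 0), σ (A 1)⁆ = 0 := by
    rw [eS0, eS1]
    simp only [subL, lieSubL, smulL, lieS, hcc, z02, z03, z05, z52, z53, selfL, lie_self,
      tmul_zero, smul_zero, sub_zero, zero_sub, neg_zero, sub_self]
  have bS02 : ⁅σ (A 0), σ (A 2)⁆ = 0 := by
    rw [eS0, eS2]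
    simp only [subL, lieSubL, smulL, lieS, hcc, z04, h1, z03, z05, h3', z51, z53,
      selfL, lie_self, tmul_zero, tmul_neg, smul_zero, sub_zero, zero_sub, neg_zero, smul_neg, c6']
    module
  have bS12 : ⁅σ (A 1), σ (A 2)⁆ = 0 := by
    rw [eS1, eS2]
    simp only [subL, lieSubL, smulL, lieS, hcc, z24, h5', h2, z25, h4, z31, z35, h3',
      z51, z53, selfL, lie_self, tmul_zero, tmul_neg, smul_zero, sub_zero, zero_sub, neg_zero, smul_neg,
      c6', c7']
    module
  have m00 : ⁅A 0, σ (A 0)⁆ = 0 := by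
    rw [eS0, eA0]
    simp only [addL, lieAddL, subL, lieSubL, smulL, lieS, hcc, z05, z50, selfL, lie_self,
      tmul_zero, smul_zero, sub_zero, sub_self, add_zero, zero_add, zero_sub, neg_zero]
  have m01 : ⁅A 0, σ (A 1)⁆ = 0 := by
    rw [eS1, eA0]
    simp only [addL, lieAddL, subL, lieSubL, smulL, lieS, hcc, z02, z03, z05, z52, z53, selfL, lie_self,
      tmul_zero, smul_zero, sub_zero, sub_self, add_zero, zero_add, zero_sub, neg_zero]
  have m02 : ⁅A 0, σ (A 2)⁆ = B 0 := by
    rw [eS2, eA0, eB0]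
    simp only [addL, lieAddL, subL, lieSubL, smulL, lieS, hcc, z04, h1, z03, z05, h3', z51, z53,
      selfL, lie_self, tmul_zero, tmul_neg, smul_zero, sub_zero, smul_neg, c6']
    module
  have m10 : ⁅A 1, σ (A 0)⁆ = 0 := by
    rw [eS0, eA1]
    simp only [addL, lieAddL, subL, lieSubL, smulL, lieS, hcc, z20, z25, z30, z35, z50, selfL, lie_self,
      tmul_zero, smul_zero, sub_zero, sub_self, add_zero, zero_add, zero_sub, neg_zero]
  have m11 : ⁅A 1, σ (A 1)⁆ = B 0 := by
    rw [eS1, eA1, eB0]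
    simp only [addL, lieAddL, subL, lieSubL, smulL, lieS, hcc, h2, h2', z25, z35, z52, z53,
      selfL, lie_self, tmul_zero, tmul_neg, smul_zero, sub_zero, smul_neg, c6']
    module
  have m12 : ⁅A 1, σ (A 2)⁆ = B 0 - B 1 := by
    rw [eS2, eA1, eB0, eB1]
    simp only [addL, lieAddL, subL, lieSubL, smulL, lieS, hcc, z24, h5', h2, z25, h4, z31, z35, h3',
      z51, z53, selfL, lie_self, tmul_zero, tmul_neg, smul_zero, sub_zero, smul_neg, c6', c7']
    module
  have m20 : ⁅A 2, σ (A 0)⁆ = B 0 := by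
    rw [eS0, eA2, eB0]
    simp only [addL, lieAddL, subL, lieSubL, smulL, lieS, hcc, z40, h3, h1', z15, z30, z35, z50, selfL, lie_self, tmul_zero, tmul_neg, smul_zero, sub_zero, smul_neg, c6']
    module
  have m21 : ⁅A 2, σ (A 1)⁆ = B 0 - B 1 := by
    rw [eS1, eA2, eB0, eB1]
    simp only [addL, lieAddL, subL, lieSubL, smulL, lieS, hcc, z42, h4', h3, h5, z13, z15, h2',
      z35, z52, z53, selfL, lie_self, tmul_zero, tmul_neg, smul_zero, sub_zero, smul_neg, c6', c7']
    module
  have m22 : ⁅A 2, σ (A 2)⁆ = B 0 - B 1 := by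
    rw [eS2, eA2, eB0, eB1]
    simp only [addL, lieAddL, subL, lieSubL, smulL, lieS, hcc, z41, h4', h3, z14, z13, z15, h1',
      h4, h3', z31, z35, z51, z53, selfL, lie_self, tmul_zero, tmul_neg, smul_zero, sub_zero, sub_self,
      smul_neg, c6', c7']
    module
  -- spans
  set sA : Set (ℂ ⊗[ℝ] L) := {A 0, A 1, A 2} with hsA
  set sS : Set (ℂ ⊗[ℝ] L) := {σ (A 0), σ (A 1), σ (A 2)} with hsS
  set sB : Set (ℂ ⊗[ℝ] L) := {B 0, B 1} with hsB
  have hI2 : I * I = -1 := Complex.I_mul_I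
  have spanlie : ∀ (S T : Set (ℂ ⊗[ℝ] L)) (N : Submodule ℂ (ℂ ⊗[ℝ] L)),
      (∀ u ∈ S, ∀ v ∈ T, ⁅u, v⁆ ∈ N) →
      ∀ x ∈ Submodule.span ℂ S, ∀ y ∈ Submodule.span ℂ T, ⁅x, y⁆ ∈ N := by
    intro S T N h x hx
    induction hx using Submodule.span_induction with
    | mem u hu =>
      intro y hy
      induction hy using Submodule.span_induction with
      | mem v hv => exact h u hu v hv
      | zero => rw [lieZeroL]; exact N.zero_mem
      | add v w _ _ hv hw => rw [lieAddL]; exact N.add_mem hv hw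
      | smul a v _ hv => rw [lieS]; exact N.smul_mem a hv
    | zero => intro y hy; rw [zeroLieL]; exact N.zero_mem
    | add u w _ _ hu hw => intro y hy; rw [addL]; exact N.add_mem (hu y hy) (hw y hy)
    | smul a u _ hu => intro y hy; rw [smulL]; exact N.smul_mem a (hu y hy)
  have HAA : ∀ u ∈ sA, ∀ v ∈ sA, ⁅u, v⁆ ∈ (⊥ : Submodule ℂ (ℂ ⊗[ℝ] L)) := by
    intro u hu v hv
    simp only [hsA, Set.mem_insert_iff, Set.mem_singleton_iff] at hu hv
    rcases hu with rfl | rfl | rfl <;> rcases hv with rfl | rfl | rfl <;>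
      refine Submodule.mem_bot _|>.mpr ?_
    · exact selfL _
    · exact bA01
    · exact bA02
    · rw [← lie_skew, bA01, neg_zero]
    · exact selfL _
    · exact bA12
    · rw [← lie_skew, bA02, neg_zero]
    · rw [← lie_skew, bA12, neg_zero]
    · exact selfL _
  have HSS : ∀ u ∈ sS, ∀ v ∈ sS, ⁅u, v⁆ ∈ (⊥ : Submodule ℂ (ℂ ⊗[ℝ] L)) := by
    intro u hu v hv
    simp only [hsS, Set.mem_insert_iff, Set.mem_singleton_iff] at hu hv
    rcases hu with rfl | rfl | rfl <;> rcases hv with rfl | rfl | rfl <;>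
      refine Submodule.mem_bot _|>.mpr ?_
    · exact selfL _
    · exact bS01
    · exact bS02
    · rw [← lie_skew, bS01, neg_zero]
    · exact selfL _
    · exact bS12
    · rw [← lie_skew, bS02, neg_zero]
    · rw [← lie_skew, bS12, neg_zero]
    · exact selfL _
  have hB0mem : B 0 ∈ Submodule.span ℂ sB := Submodule.subset_span (by simp [hsB])
  have hB1mem : B 1 ∈ Submodule.span ℂ sB := Submodule.subset_span (by simp [hsB])
  have HAS : ∀ u ∈ sA, ∀ v ∈ sS, ⁅u, v⁆ ∈ Submodule.span ℂ sB := by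
    intro u hu v hv
    simp only [hsA, hsS, Set.mem_insert_iff, Set.mem_singleton_iff] at hu hv
    rcases hu with rfl | rfl | rfl <;> rcases hv with rfl | rfl | rfl
    · rw [m00]; exact Submodule.zero_mem _
    · rw [m01]; exact Submodule.zero_mem _
    · rw [m02]; exact hB0mem
    · rw [m10]; exact Submodule.zero_mem _
    · rw [m11]; exact hB0mem
    · rw [m12]; exact sub_mem hB0mem hB1mem
    · rw [m20]; exact hB0mem
    · rw [m21]; exact sub_mem hB0mem hB1mem
    · rw [m22]; exact sub_mem hB0mem hB1mem
  have HSA : ∀ u ∈ sS, ∀ v ∈ sA, ⁅u, v⁆ ∈ Submodule.span ℂ sB := by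
    intro u hu v hv
    rw [← lie_skew]
    exact neg_mem (HAS v hv u hu)
  have HBl : ∀ (T : Set (ℂ ⊗[ℝ] L)), ∀ u ∈ sB, ∀ v ∈ T,
      ⁅u, v⁆ ∈ (⊥ : Submodule ℂ (ℂ ⊗[ℝ] L)) := by
    intro T u hu v _
    simp only [hsB, Set.mem_insert_iff, Set.mem_singleton_iff] at hu
    rcases hu with rfl | rfl
    · rw [bxB0']; exact Submodule.zero_mem _
    · rw [bxB1']; exact Submodule.zero_mem _
  have HBr : ∀ (T : Set (ℂ ⊗[ℝ] L)), ∀ u ∈ T, ∀ v ∈ sB,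
      ⁅u, v⁆ ∈ (⊥ : Submodule ℂ (ℂ ⊗[ℝ] L)) := by
    intro T u _ v hv
    simp only [hsB, Set.mem_insert_iff, Set.mem_singleton_iff] at hv
    rcases hv with rfl | rfl
    · rw [bxB0]; exact Submodule.zero_mem _
    · rw [bxB1]; exact Submodule.zero_mem _
  -- index case analysis
  have cases3 : ∀ pq : ℤ × ℤ, pq = (-1, 0) ∨ pq = (0, -1) ∨ pq = (-1, -1) ∨
      pq ∉ ({(-1, 0), (0, -1), (-1, -1)} : Set (ℤ × ℤ)) := by
    intro pq
    by_cases ha : pq = (-1, 0)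
    · exact Or.inl ha
    by_cases hb : pq = (0, -1)
    · exact Or.inr (Or.inl hb)
    by_cases hc2 : pq = (-1, -1)
    · exact Or.inr (Or.inr (Or.inl hc2))
    refine Or.inr (Or.inr (Or.inr ?_))
    simp only [Set.mem_insert_iff, Set.mem_singleton_iff]
    push_neg
    exact ⟨ha, hb, hc2⟩
  have nb : ∀ u v : ℤ, ¬(u = -1 ∧ v = 0) → ¬(u = 0 ∧ v = -1) → ¬(u = -1 ∧ v = -1) →
      n (u, v) = ⊥ := by
    intro u v a1 a2 a3
    refine hn0 _ ?_
    simp only [Set.mem_insert_iff, Set.mem_singleton_iff, Prod.mk.injEq]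
    rintro (⟨e1, e2⟩ | ⟨e1, e2⟩ | ⟨e1, e2⟩)
    · exact a1 ⟨e1, e2⟩
    · exact a2 ⟨e1, e2⟩
    · exact a3 ⟨e1, e2⟩
  -- the basis family
  set e : Fin 8 → (ℂ ⊗[ℝ] L) :=
    ![A 0, A 1, A 2, σ (A 0), σ (A 1), σ (A 2), B 0, B 1] with he
  have he0 : e 0 = A 0 := rfl
  have he1 : e 1 = A 1 := rfl
  have he2 : e 2 = A 2 := rfl
  have he3 : e 3 = σ (A 0) := rfl
  have he4 : e 4 = σ (A 1) := rfl
  have he5 : e 5 = σ (A 2) := rfl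
  have he6 : e 6 = B 0 := rfl
  have he7 : e 7 = B 1 := rfl
  have imA : e '' ({0, 1, 2} : Set (Fin 8)) = sA := by
    rw [Set.image_insert_eq, Set.image_insert_eq, Set.image_singleton, he0, he1, he2]
  have imS : e '' ({3, 4, 5} : Set (Fin 8)) = sS := by
    rw [Set.image_insert_eq, Set.image_insert_eq, Set.image_singleton, he3, he4, he5]
  have imB : e '' ({6, 7} : Set (Fin 8)) = sB := by
    rw [Set.image_insert_eq, Set.image_singleton, he6, he7]
  -- linear independence
  have hLI : LinearIndependent ℂ e := by
    rw [Fintype.linearIndependent_iff]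
    intro g hg
    have r0 : c.repr (e 0) = Finsupp.single 0 1 + I • Finsupp.single 5 1 := by
      rw [he0, eA0, map_add, map_smul, Module.Basis.repr_self, Module.Basis.repr_self]
    have r1 : c.repr (e 1) = Finsupp.single 2 1 + I • Finsupp.single 3 1
        + I • Finsupp.single 5 1 := by
      rw [he1, eA1, map_add, map_add, map_smul, map_smul,
        Module.Basis.repr_self, Module.Basis.repr_self, Module.Basis.repr_self]
    have r2 : c.repr (e 2) = Finsupp.single 4 1 + I • Finsupp.single 1 1
        + I • Finsupp.single 3 1 + I • Finsupp.single 5 1 := by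
      rw [he2, eA2, map_add, map_add, map_add, map_smul, map_smul, map_smul,
        Module.Basis.repr_self, Module.Basis.repr_self, Module.Basis.repr_self, Module.Basis.repr_self]
    have r3 : c.repr (e 3) = Finsupp.single 0 1 - I • Finsupp.single 5 1 := by
      rw [he3, eS0, map_sub, map_smul, Module.Basis.repr_self, Module.Basis.repr_self]
    have r4 : c.repr (e 4) = Finsupp.single 2 1 - I • Finsupp.single 3 1
        - I • Finsupp.single 5 1 := by
      rw [he4, eS1, map_sub, map_sub, map_smul, map_smul,
        Module.Basis.repr_self, Module.Basis.repr_self, Module.Basis.repr_self]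
    have r5 : c.repr (e 5) = Finsupp.single 4 1 - I • Finsupp.single 1 1
        - I • Finsupp.single 3 1 - I • Finsupp.single 5 1 := by
      rw [he5, eS2, map_sub, map_sub, map_sub, map_smul, map_smul, map_smul,
        Module.Basis.repr_self, Module.Basis.repr_self, Module.Basis.repr_self, Module.Basis.repr_self]
    have r6 : c.repr (e 6) = (-2 * I) • Finsupp.single 6 1 := by
      rw [he6, eB0, map_smul, Module.Basis.repr_self]
    have r7 : c.repr (e 7) = (-2 * I) • Finsupp.single 7 1 := by
      rw [he7, eB1, map_smul, Module.Basis.repr_self]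
    have hco : ∀ k : Fin 8, ∑ i, g i * (c.repr (e i)) k = 0 := by
      intro k
      have h' := congrArg (fun x => (c.repr x) k) hg
      simp only [map_sum, map_smul, Finsupp.coe_finset_sum, Finset.sum_apply,
        Finsupp.smul_apply, smul_eq_mul, map_zero, Finsupp.coe_zero, Pi.zero_apply] at h'
      exact h'
    have E0 := hco 0
    have E1 := hco 1
    have E2 := hco 2
    have E3 := hco 3
    have E4 := hco 4
    have E5 := hco 5
    have E6 := hco 6
    have E7 := hco 7
    simp (config := { decide := true }) only [Fin.sum_univ_eight, r0, r1, r2, r3, r4, r5, r6,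
      r7, Finsupp.add_apply, Finsupp.sub_apply, Finsupp.smul_apply, Finsupp.single_apply,
      smul_eq_mul, if_true, if_false, mul_zero, zero_mul, mul_one, add_zero, zero_add,
      sub_zero, zero_sub, mul_neg, neg_zero] at E0 E1 E2 E3 E4 E5 E6 E7
    have F1 : g 2 - g 5 = 0 := by linear_combination (-I) * E1 + (g 2 - g 5) * hI2
    have F3 : g 1 + g 2 - g 4 - g 5 = 0 := by
      linear_combination (-I) * E3 + (g 1 + g 2 - g 4 - g 5) * hI2
    have F5 : g 0 + g 1 + g 2 - g 3 - g 4 - g 5 = 0 := by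
      linear_combination (-I) * E5 + (g 0 + g 1 + g 2 - g 3 - g 4 - g 5) * hI2
    have hg2 : g 2 = 0 := by linear_combination (1/2 : ℂ) * F1 + (1/2 : ℂ) * E4
    have hg5 : g 5 = 0 := by linear_combination (1/2 : ℂ) * E4 - (1/2 : ℂ) * F1
    have hg1 : g 1 = 0 := by
      linear_combination (1/2 : ℂ) * F3 - (1/2 : ℂ) * F1 + (1/2 : ℂ) * E2
    have hg4 : g 4 = 0 := by
      linear_combination (1/2 : ℂ) * E2 - (1/2 : ℂ) * F3 + (1/2 : ℂ) * F1
    have hg0 : g 0 = 0 := by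
      linear_combination (1/2 : ℂ) * E0 + (1/2 : ℂ) * F5 - (1/2 : ℂ) * F3
    have hg3 : g 3 = 0 := by
      linear_combination (1/2 : ℂ) * E0 - (1/2 : ℂ) * F5 + (1/2 : ℂ) * F3
    have hg6 : g 6 = 0 := by linear_combination (I/2 : ℂ) * E6 + g 6 * hI2
    have hg7 : g 7 = 0 := by linear_combination (I/2 : ℂ) * E7 + g 7 * hI2
    intro i
    fin_cases i
    · exact hg0
    · exact hg1
    · exact hg2
    · exact hg3
    · exact hg4
    · exact hg5
    · exact hg6
    · exact hg7
  -- iSup = top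
  have mA : ∀ i : Fin 3, A i ∈ ⨆ pq, n pq := by
    intro i
    refine le_iSup n ((-1 : ℤ), (0 : ℤ)) ?_
    rw [hn1]
    refine Submodule.subset_span ?_
    fin_cases i <;> simp [hsA]
  have mS : ∀ i : Fin 3, σ (A i) ∈ ⨆ pq, n pq := by
    intro i
    refine le_iSup n ((0 : ℤ), (-1 : ℤ)) ?_
    rw [hn2]
    refine Submodule.subset_span ?_
    fin_cases i <;> simp [hsS]
  have mB : ∀ i : Fin 2, B i ∈ ⨆ pq, n pq := by
    intro i
    refine le_iSup n ((-1 : ℤ), (-1 : ℤ)) ?_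
    rw [hn3]
    refine Submodule.subset_span ?_
    fin_cases i <;> simp [hsB]
  have hsmulI : ∀ x : ℂ ⊗[ℝ] L, x = (-I) • (I • x) := by
    intro x
    rw [smul_smul, neg_mul, hI2, neg_neg, one_smul]
  have t5 : I • c 5 = (1/2 : ℂ) • A 0 - (1/2 : ℂ) • σ (A 0) := by
    rw [eS0, eA0]; module
  have t3 : I • c 3 = (1/2 : ℂ) • A 1 - (1/2 : ℂ) • σ (A 1)
      - (1/2 : ℂ) • A 0 + (1/2 : ℂ) • σ (A 0) := by
    rw [eS0, eS1, eA0, eA1]; module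
  have t1 : I • c 1 = (1/2 : ℂ) • A 2 - (1/2 : ℂ) • σ (A 2)
      - (1/2 : ℂ) • A 1 + (1/2 : ℂ) • σ (A 1) := by
    rw [eS1, eS2, eA1, eA2]; module
  have t6 : I • c 6 = (-(1/2) : ℂ) • B 0 := by rw [eB0]; module
  have t7 : I • c 7 = (-(1/2) : ℂ) • B 1 := by rw [eB1]; module
  have tc0 : c 0 = (1/2 : ℂ) • A 0 + (1/2 : ℂ) • σ (A 0) := by
    rw [eS0, eA0]; module
  have tc2' : c 2 = (1/2 : ℂ) • A 1 + (1/2 : ℂ) • σ (A 1) := by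
    rw [eS1, eA1]; module
  have tc4 : c 4 = (1/2 : ℂ) • A 2 + (1/2 : ℂ) • σ (A 2) := by
    rw [eS2, eA2]; module
  have hmem : ∀ k : Fin 8, c k ∈ ⨆ pq, n pq := by
    have m5 : c 5 ∈ ⨆ pq, n pq := by
      rw [hsmulI (c 5), t5]
      exact Submodule.smul_mem _ _ (sub_mem (Submodule.smul_mem _ _ (mA 0))
        (Submodule.smul_mem _ _ (mS 0)))
    have m5' : I • c 5 ∈ ⨆ pq, n pq := Submodule.smul_mem _ _ m5
    have m3 : c 3 ∈ ⨆ pq, n pq := by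
      rw [hsmulI (c 3), t3]
      exact Submodule.smul_mem _ _ (add_mem (sub_mem (sub_mem
        (Submodule.smul_mem _ _ (mA 1)) (Submodule.smul_mem _ _ (mS 1)))
        (Submodule.smul_mem _ _ (mA 0))) (Submodule.smul_mem _ _ (mS 0)))
    have m3' : I • c 3 ∈ ⨆ pq, n pq := Submodule.smul_mem _ _ m3
    have m1 : c 1 ∈ ⨆ pq, n pq := by
      rw [hsmulI (c 1), t1]
      exact Submodule.smul_mem _ _ (add_mem (sub_mem (sub_mem
        (Submodule.smul_mem _ _ (mA 2)) (Submodule.smul_mem _ _ (mS 2)))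
        (Submodule.smul_mem _ _ (mA 1))) (Submodule.smul_mem _ _ (mS 1)))
    have m1' : I • c 1 ∈ ⨆ pq, n pq := Submodule.smul_mem _ _ m1
    have m0 : c 0 ∈ ⨆ pq, n pq := by
      rw [tc0]
      exact add_mem (Submodule.smul_mem _ _ (mA 0)) (Submodule.smul_mem _ _ (mS 0))
    have m2 : c 2 ∈ ⨆ pq, n pq := by
      rw [tc2']
      exact add_mem (Submodule.smul_mem _ _ (mA 1)) (Submodule.smul_mem _ _ (mS 1))
    have m4 : c 4 ∈ ⨆ pq, n pq := by
      rw [tc4]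
      exact add_mem (Submodule.smul_mem _ _ (mA 2)) (Submodule.smul_mem _ _ (mS 2))
    have m6 : c 6 ∈ ⨆ pq, n pq := by
      rw [hsmulI (c 6), t6]
      exact Submodule.smul_mem _ _ (Submodule.smul_mem _ _ (mB 0))
    have m7 : c 7 ∈ ⨆ pq, n pq := by
      rw [hsmulI (c 7), t7]
      exact Submodule.smul_mem _ _ (Submodule.smul_mem _ _ (mB 1))
    intro k
    fin_cases k
    · exact m0
    · exact m1
    · exact m2
    · exact m3
    · exact m4
    · exact m5
    · exact m6
    · exact m7
  have htop : (⨆ pq, n pq) = ⊤ := by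
    rw [eq_top_iff, ← c.span_eq]
    refine Submodule.span_le.mpr ?_
    rintro x ⟨k, rfl⟩
    exact hmem k
  -- independence
  have hind : iSupIndep n := by
    rw [iSupIndep_def]
    intro pq
    have key : ∀ (s0 : Set (Fin 8)) (rest : Set (Fin 8)), Disjoint s0 rest →
        n pq = Submodule.span ℂ (e '' s0) →
        (∀ j : ℤ × ℤ, j ≠ pq → n j ≤ Submodule.span ℂ (e '' rest)) →
        Disjoint (n pq) (⨆ (j) (_ : j ≠ pq), n j) := by
      intro s0 rest hdis hpq hrest
      refine Disjoint.mono_right (iSup_le fun j => iSup_le fun hj => hrest j hj) ?_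
      rw [hpq]
      exact hLI.disjoint_span_image hdis
    rcases cases3 pq with rfl | rfl | rfl | h
    · refine key {0, 1, 2} {3, 4, 5, 6, 7} ?_ (by rw [imA, hn1]) ?_
      · rw [Set.disjoint_left]
        rintro a (rfl | rfl | rfl) hb <;> simp at hb
      · intro j hj
        rcases cases3 j with rfl | rfl | rfl | h'
        · exact absurd rfl hj
        · rw [hn2, ← imS]
          refine Submodule.span_mono (Set.image_mono ?_)
          intro a ha
          simp only [Set.mem_insert_iff, Set.mem_singleton_iff] at ha ⊢
          tauto
        · rw [hn3, ← imB]
          refine Submodule.span_mono (Set.image_mono ?_)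
          intro a ha
          simp only [Set.mem_insert_iff, Set.mem_singleton_iff] at ha ⊢
          tauto
        · rw [hn0 j h']; exact bot_le
    · refine key {3, 4, 5} {0, 1, 2, 6, 7} ?_ (by rw [imS, hn2]) ?_
      · rw [Set.disjoint_left]
        rintro a (rfl | rfl | rfl) hb <;> simp at hb
      · intro j hj
        rcases cases3 j with rfl | rfl | rfl | h'
        · rw [hn1, ← imA]
          refine Submodule.span_mono (Set.image_mono ?_)
          intro a ha
          simp only [Set.mem_insert_iff, Set.mem_singleton_iff] at ha ⊢
          tauto
        · exact absurd rfl hj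
        · rw [hn3, ← imB]
          refine Submodule.span_mono (Set.image_mono ?_)
          intro a ha
          simp only [Set.mem_insert_iff, Set.mem_singleton_iff] at ha ⊢
          tauto
        · rw [hn0 j h']; exact bot_le
    · refine key {6, 7} {0, 1, 2, 3, 4, 5} ?_ (by rw [imB, hn3]) ?_
      · rw [Set.disjoint_left]
        rintro a (rfl | rfl) hb <;> simp at hb
      · intro j hj
        rcases cases3 j with rfl | rfl | rfl | h'
        · rw [hn1, ← imA]
          refine Submodule.span_mono (Set.image_mono ?_)
          intro a ha
          simp only [Set.mem_insert_iff, Set.mem_singleton_iff] at ha ⊢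
          tauto
        · rw [hn2, ← imS]
          refine Submodule.span_mono (Set.image_mono ?_)
          intro a ha
          simp only [Set.mem_insert_iff, Set.mem_singleton_iff] at ha ⊢
          tauto
        · exact absurd rfl hj
        · rw [hn0 j h']; exact bot_le
    · rw [hn0 pq h]
      exact disjoint_bot_left
  -- sigma images of spans
  have him1 : ∀ (S T : Set (ℂ ⊗[ℝ] L)), (∀ u ∈ S, σ u ∈ Submodule.span ℂ T) →
      ∀ x ∈ Submodule.span ℂ S, σ x ∈ Submodule.span ℂ T := by
    intro S T hST x hx
    induction hx using Submodule.span_induction with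
    | mem u hu => exact hST u hu
    | zero => rw [map_zero]; exact Submodule.zero_mem _
    | add u v _ _ hu hv => rw [map_add]; exact Submodule.add_mem _ hu hv
    | smul a u _ hu => rw [hsm]; exact Submodule.smul_mem _ _ hu
  have him : ∀ (S T : Set (ℂ ⊗[ℝ] L)), (∀ u ∈ S, σ u ∈ Submodule.span ℂ T) →
      (∀ u ∈ T, σ u ∈ Submodule.span ℂ S) →
      σ '' ((Submodule.span ℂ S : Submodule ℂ (ℂ ⊗[ℝ] L)) : Set (ℂ ⊗[ℝ] L)) =
      ((Submodule.span ℂ T : Submodule ℂ (ℂ ⊗[ℝ] L)) : Set (ℂ ⊗[ℝ] L)) := by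
    intro S T hST hTS
    apply Set.Subset.antisymm
    · rintro _ ⟨x, hx, rfl⟩
      exact him1 S T hST x hx
    · intro y hy
      exact ⟨σ y, him1 T S hTS y hy, hinv y⟩
  have gAS : ∀ u ∈ sA, σ u ∈ Submodule.span ℂ sS := by
    intro u hu
    simp only [hsA, Set.mem_insert_iff, Set.mem_singleton_iff] at hu
    rcases hu with rfl | rfl | rfl <;> exact Submodule.subset_span (by simp [hsS])
  have gSA : ∀ u ∈ sS, σ u ∈ Submodule.span ℂ sA := by
    intro u hu
    simp only [hsS, Set.mem_insert_iff, Set.mem_singleton_iff] at hu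
    rcases hu with rfl | rfl | rfl <;>
      rw [hinv] <;> exact Submodule.subset_span (by simp [hsA])
  have sB0 : σ (B 0) = -B 0 := by
    rw [eB0, hsm, hσ1, show (starRingEnd ℂ) (-2 * I) = -(-2 * I) by simp [map_mul, map_neg, map_ofNat, hI, Complex.conj_I], neg_smul]
  have sB1 : σ (B 1) = -B 1 := by
    rw [eB1, hsm, hσ1, show (starRingEnd ℂ) (-2 * I) = -(-2 * I) by simp [map_mul, map_neg, map_ofNat, hI, Complex.conj_I], neg_smul]
  have gBB : ∀ u ∈ sB, σ u ∈ Submodule.span ℂ sB := by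
    intro u hu
    simp only [hsB, Set.mem_insert_iff, Set.mem_singleton_iff] at hu
    rcases hu with rfl | rfl
    · rw [sB0]; exact neg_mem hB0mem
    · rw [sB1]; exact neg_mem hB1mem
  refine ⟨DirectSum.isInternal_submodule_of_iSupIndep_of_iSup_eq_top hind htop, ?_, ?_⟩
  · -- bracket grading
    intro p q r s x hx y hy
    rcases cases3 (p, q) with hh | hh | hh | hh
    · simp only [Prod.mk.injEq] at hh
      obtain ⟨rfl, rfl⟩ := hh
      rw [hn1] at hx
      rcases cases3 (r, s) with hh2 | hh2 | hh2 | hh2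
      · simp only [Prod.mk.injEq] at hh2
        obtain ⟨rfl, rfl⟩ := hh2
        rw [hn1] at hy
        rw [nb _ _ (by omega) (by omega) (by omega)]
        exact spanlie sA sA ⊥ HAA x hx y hy
      · simp only [Prod.mk.injEq] at hh2
        obtain ⟨rfl, rfl⟩ := hh2
        rw [hn2] at hy
        rw [show ((-1 : ℤ) + 0, (0 : ℤ) + -1) = ((-1 : ℤ), (-1 : ℤ)) by norm_num, hn3]
        exact spanlie sA sS _ HAS x hx y hy
      · simp only [Prod.mk.injEq] at hh2
        obtain ⟨rfl, rfl⟩ := hh2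
        rw [hn3] at hy
        rw [nb _ _ (by omega) (by omega) (by omega)]
        exact spanlie sA sB ⊥ (HBr sA) x hx y hy
      · rw [hn0 _ hh2, Submodule.mem_bot] at hy
        subst hy
        rw [lieZeroL]
        exact Submodule.zero_mem _
    · simp only [Prod.mk.injEq] at hh
      obtain ⟨rfl, rfl⟩ := hh
      rw [hn2] at hx
      rcases cases3 (r, s) with hh2 | hh2 | hh2 | hh2
      · simp only [Prod.mk.injEq] at hh2
        obtain ⟨rfl, rfl⟩ := hh2
        rw [hn1] at hy
        rw [show ((0 : ℤ) + -1, (-1 : ℤ) + 0) = ((-1 : ℤ), (-1 : ℤ)) by norm_num, hn3]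
        exact spanlie sS sA _ HSA x hx y hy
      · simp only [Prod.mk.injEq] at hh2
        obtain ⟨rfl, rfl⟩ := hh2
        rw [hn2] at hy
        rw [nb _ _ (by omega) (by omega) (by omega)]
        exact spanlie sS sS ⊥ HSS x hx y hy
      · simp only [Prod.mk.injEq] at hh2
        obtain ⟨rfl, rfl⟩ := hh2
        rw [hn3] at hy
        rw [nb _ _ (by omega) (by omega) (by omega)]
        exact spanlie sS sB ⊥ (HBr sS) x hx y hy
      · rw [hn0 _ hh2, Submodule.mem_bot] at hy
        subst hy
        rw [lieZeroL]
        exact Submodule.zero_mem _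
    · simp only [Prod.mk.injEq] at hh
      obtain ⟨rfl, rfl⟩ := hh
      rw [hn3] at hx
      rcases cases3 (r, s) with hh2 | hh2 | hh2 | hh2
      · simp only [Prod.mk.injEq] at hh2
        obtain ⟨rfl, rfl⟩ := hh2
        rw [hn1] at hy
        rw [nb _ _ (by omega) (by omega) (by omega)]
        exact spanlie sB sA ⊥ (HBl sA) x hx y hy
      · simp only [Prod.mk.injEq] at hh2
        obtain ⟨rfl, rfl⟩ := hh2
        rw [hn2] at hy
        rw [nb _ _ (by omega) (by omega) (by omega)]
        exact spanlie sB sS ⊥ (HBl sS) x hx y hy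
      · simp only [Prod.mk.injEq] at hh2
        obtain ⟨rfl, rfl⟩ := hh2
        rw [hn3] at hy
        rw [nb _ _ (by omega) (by omega) (by omega)]
        exact spanlie sB sB ⊥ (HBl sB) x hx y hy
      · rw [hn0 _ hh2, Submodule.mem_bot] at hy
        subst hy
        rw [lieZeroL]
        exact Submodule.zero_mem _
    · rw [hn0 _ hh, Submodule.mem_bot] at hx
      subst hx
      rw [zeroLieL]
      exact Submodule.zero_mem _
  · -- sigma symmetry
    intro p q
    rcases cases3 (p, q) with hh | hh | hh | hh
    · simp only [Prod.mk.injEq] at hh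
      obtain ⟨rfl, rfl⟩ := hh
      rw [hn1, hn2]
      exact him sA sS gAS gSA
    · simp only [Prod.mk.injEq] at hh
      obtain ⟨rfl, rfl⟩ := hh
      rw [hn2, hn1]
      exact him sS sA gSA gAS
    · simp only [Prod.mk.injEq] at hh
      obtain ⟨rfl, rfl⟩ := hh
      rw [hn3]
      exact him sB sB gBB gBB
    · have hq : ((q, p) : ℤ × ℤ) ∉ ({(-1, 0), (0, -1), (-1, -1)} : Set (ℤ × ℤ)) := by
        intro hmem
        apply hh
        simp only [Set.mem_insert_iff, Set.mem_singleton_iff, Prod.mk.injEq] at hmem ⊢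
        tauto
      rw [hn0 _ hh, hn0 _ hq]
      simp
end

section
/- Let 𝔤 be the real Lie algebra given by structure constants on the basis X₁, X₂, Y₁, Y₂, Z₁, Z₂, A, B with nonzero brackets ⁅X₁,Y₁⁆ = Z₁, ⁅X₂,Y₂⁆ = Z₁, ⁅X₂,Y₁⁆ = Z₂, ⁅X₁,Y₂⁆ = Z₂, ⁅X₁,Z₁⁆ = A, ⁅X₂,Z₂⁆ = A, ⁅Y₁,Z₁⁆ = B, ⁅Y₂,Z₂⁆ = B, and let 𝔤_ℂ = ℂ ⊗_ℝ 𝔤 be its complexification with conjugation σ. Set A₁ = X₁ + i Y₁, A₂ = X₂ + i Y₂, B₁ = −2i Z₁, B₂ = −2i Z₂, C₁ = −2i(A + iB). Then the ℤ²-decomposition with 𝔫_{-1,0} = spanℂ{A₁,A₂}, 𝔫_{0,-1} = spanℂ{σ(A₁),σ(A₂)}, 𝔫_{-1,-1} = spanℂ{B₁,B₂}, 𝔫_{-2,-1} = spanℂ{C₁}, 𝔫_{-1,-2} = spanℂ{σ(C₁)} and all other pieces zero is a grading of 𝔤_ℂ, i.e. ⁅𝔫_{p,q}, 𝔫_{r,s}⁆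 ⊆ 𝔫_{p+r,q+s} for all (p,q),(r,s), and σ(𝔫_{p,q}) = 𝔫_{q,p} for all (p,q). -/
open TensorProduct

theorem auxbr {R M : Type*} [CommRing R] [LieRing M] [LieAlgebra R M]
    {S T : Set M} {N : Submodule R M} (h : ∀ s ∈ S, ∀ t ∈ T, ⁅s, t⁆ ∈ N) :
    ∀ x ∈ Submodule.span R S, ∀ y ∈ Submodule.span R T, ⁅x, y⁆ ∈ N := by
  have inner : ∀ s ∈ S, ∀ y ∈ Submodule.span R T, ⁅s, y⁆ ∈ N := by
    intro s hs y hy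
    induction hy using Submodule.span_induction with
    | mem t ht => exact h s hs t ht
    | zero => simp
    | add y z _ _ hy hz => rw [lie_add]; exact N.add_mem hy hz
    | smul c y _ hy => rw [lie_smul]; exact N.smul_mem c hy
  intro x hx y hy
  induction hx using Submodule.span_induction with
  | mem s hs => exact inner s hs y hy
  | zero => simp
  | add u v _ _ hu hv => rw [add_lie]; exact N.add_mem hu hv
  | smul c u _ hu => rw [smul_lie]; exact N.smul_mem c hu

set_option maxHeartbeats 4000000 in
/-- bigrading of the complexification of the 3-step real Lie algebra `𝔤`
(basis `X₁,X₂,Y₁,Y₂,Z₁,Z₂,A,B` with `⁅X₁,Y₁⁆=Z₁, ⁅X₂,Y₂⁆=Z₁, ⁅X₂,Y₁⁆=Z₂, ⁅X₁,Y₂⁆=Z₂,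
⁅X₁,Z₁⁆=A, ⁅X₂,Z₂⁆=A, ⁅Y₁,Z₁⁆=B, ⁅Y₂,Z₂⁆=B`), via `A₁ = X₁+iY₁, A₂ = X₂+iY₂,
B₁ = −2iZ₁, B₂ = −2iZ₂, C₁ = −2i(A+iB) = −2iA + 2B`.
The basis is indexed by `Fin 8`: `b 0 = X₁, b 1 = X₂, b 2 = Y₁, b 3 = Y₂, b 4 = Z₁,
b 5 = Z₂, b 6 = A, b 7 = B`; `σ` is the conjugation of `ℂ ⊗[ℝ] L`. -/
theorem stmt16 {L : Type*} [LieRing L] [LieAlgebra ℝ L]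
    (b : Module.Basis (Fin 8) ℝ L)
    (h1 : ⁅b 0, b 2⁆ = b 4) (h2 : ⁅b 1, b 3⁆ = b 4)
    (h3 : ⁅b 1, b 2⁆ = b 5) (h4 : ⁅b 0, b 3⁆ = b 5)
    (h5 : ⁅b 0, b 4⁆ = b 6) (h6 : ⁅b 1, b 5⁆ = b 6)
    (h7 : ⁅b 2, b 4⁆ = b 7) (h8 : ⁅b 3, b 5⁆ = b 7)
    (h0 : ∀ i j : Fin 8, i < j →
      (i, j) ∉ ({(0, 2), (1, 3), (1, 2), (0, 3), (0, 4), (1, 5), (2, 4), (3, 5)} :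
        Set (Fin 8 × Fin 8)) →
      ⁅b i, b j⁆ = 0)
    (σ : (ℂ ⊗[ℝ] L) →ₗ[ℝ] (ℂ ⊗[ℝ] L))
    (hσ : ∀ (z : ℂ) (v : L), σ (z ⊗ₜ[ℝ] v) = (starRingEnd ℂ z) ⊗ₜ[ℝ] v)
    (A : Fin 2 → (ℂ ⊗[ℝ] L)) (B : Fin 2 → (ℂ ⊗[ℝ] L)) (C : ℂ ⊗[ℝ] L)
    (hA1 : A 0 = (1 : ℂ) ⊗ₜ[ℝ] b 0 + Complex.I ⊗ₜ[ℝ] b 2)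
    (hA2 : A 1 = (1 : ℂ) ⊗ₜ[ℝ] b 1 + Complex.I ⊗ₜ[ℝ] b 3)
    (hB1 : B 0 = (-2 * Complex.I) ⊗ₜ[ℝ] b 4)
    (hB2 : B 1 = (-2 * Complex.I) ⊗ₜ[ℝ] b 5)
    (hC : C = (-2 * Complex.I) ⊗ₜ[ℝ] b 6 + (2 : ℂ) ⊗ₜ[ℝ] b 7)
    (n : ℤ × ℤ → Submodule ℂ (ℂ ⊗[ℝ] L))
    (hn1 : n (-1, 0) = Submodule.span ℂ {A 0, A 1})
    (hn2 : n (0, -1) = Submodule.span ℂ {σ (A 0), σ (A 1)})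
    (hn3 : n (-1, -1) = Submodule.span ℂ {B 0, B 1})
    (hn4 : n (-2, -1) = Submodule.span ℂ {C})
    (hn5 : n (-1, -2) = Submodule.span ℂ {σ C})
    (hn0 : ∀ pq : ℤ × ℤ,
      pq ∉ ({(-1, 0), (0, -1), (-1, -1), (-2, -1), (-1, -2)} : Set (ℤ × ℤ)) → n pq = ⊥) :
    DirectSum.IsInternal n ∧
    (∀ p q r s : ℤ, ∀ x ∈ n (p, q), ∀ y ∈ n (r, s), ⁅x, y⁆ ∈ n (p + r, q + s)) ∧
    (∀ p q : ℤ, σ '' (n (p, q) : Set (ℂ ⊗[ℝ] L)) = (n (q, p) : Set (ℂ ⊗[ℝ] L))) := by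
  -- zero brackets of basis vectors
  have z0 : ∀ i j : Fin 8,
      (i, j) ∉ ({(0, 2), (1, 3), (1, 2), (0, 3), (0, 4), (1, 5), (2, 4), (3, 5)} :
        Set (Fin 8 × Fin 8)) →
      (j, i) ∉ ({(0, 2), (1, 3), (1, 2), (0, 3), (0, 4), (1, 5), (2, 4), (3, 5)} :
        Set (Fin 8 × Fin 8)) →
      ⁅b i, b j⁆ = 0 := by
    intro i j hij hji
    rcases lt_trichotomy i j with h | h | h
    · exact h0 i j h hij
    · subst h; exact lie_self _
    · rw [← lie_skew, h0 j i h hji, neg_zero]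
  have z01 : ⁅b 0, b 1⁆ = 0 := z0 0 1 (by decide) (by decide)
  have z10 : ⁅b 1, b 0⁆ = 0 := z0 1 0 (by decide) (by decide)
  have z23 : ⁅b 2, b 3⁆ = 0 := z0 2 3 (by decide) (by decide)
  have z32 : ⁅b 3, b 2⁆ = 0 := z0 3 2 (by decide) (by decide)
  have z05 : ⁅b 0, b 5⁆ = 0 := z0 0 5 (by decide) (by decide)
  have z14 : ⁅b 1, b 4⁆ = 0 := z0 1 4 (by decide) (by decide)
  have z25 : ⁅b 2, b 5⁆ = 0 := z0 2 5 (by decide) (by decide)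
  have z34 : ⁅b 3, b 4⁆ = 0 := z0 3 4 (by decide) (by decide)
  have z06 : ⁅b 0, b 6⁆ = 0 := z0 0 6 (by decide) (by decide)
  have z07 : ⁅b 0, b 7⁆ = 0 := z0 0 7 (by decide) (by decide)
  have z16 : ⁅b 1, b 6⁆ = 0 := z0 1 6 (by decide) (by decide)
  have z17 : ⁅b 1, b 7⁆ = 0 := z0 1 7 (by decide) (by decide)
  have z26 : ⁅b 2, b 6⁆ = 0 := z0 2 6 (by decide) (by decide)
  have z27 : ⁅b 2, b 7⁆ = 0 := z0 2 7 (by decide) (by decide)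
  have z36 : ⁅b 3, b 6⁆ = 0 := z0 3 6 (by decide) (by decide)
  have z37 : ⁅b 3, b 7⁆ = 0 := z0 3 7 (by decide) (by decide)
  have z45 : ⁅b 4, b 5⁆ = 0 := z0 4 5 (by decide) (by decide)
  have z54 : ⁅b 5, b 4⁆ = 0 := z0 5 4 (by decide) (by decide)
  have z46 : ⁅b 4, b 6⁆ = 0 := z0 4 6 (by decide) (by decide)
  have z47 : ⁅b 4, b 7⁆ = 0 := z0 4 7 (by decide) (by decide)
  have z56 : ⁅b 5, b 6⁆ = 0 := z0 5 6 (by decide) (by decide)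
  have z57 : ⁅b 5, b 7⁆ = 0 := z0 5 7 (by decide) (by decide)
  have z67 : ⁅b 6, b 7⁆ = 0 := z0 6 7 (by decide) (by decide)
  have z76 : ⁅b 7, b 6⁆ = 0 := z0 7 6 (by decide) (by decide)
  have r20 : ⁅b 2, b 0⁆ = -b 4 := by rw [← lie_skew, h1]
  have r21 : ⁅b 2, b 1⁆ = -b 5 := by rw [← lie_skew, h3]
  have r30 : ⁅b 3, b 0⁆ = -b 5 := by rw [← lie_skew, h4]
  have r31 : ⁅b 3, b 1⁆ = -b 4 := by rw [← lie_skew, h2]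
  -- brackets of elementary tensors
  have E : ∀ i j : Fin 8, ⁅(1:ℂ) ⊗ₜ[ℝ] b i, (1:ℂ) ⊗ₜ[ℝ] b j⁆ = (1:ℂ) ⊗ₜ[ℝ] ⁅b i, b j⁆ := by
    intro i j
    rw [LieAlgebra.ExtendScalars.bracket_tmul, one_mul]
  have he : ∀ (zc : ℂ) (k : Fin 8), zc ⊗ₜ[ℝ] b k = zc • ((1:ℂ) ⊗ₜ[ℝ] b k) := by
    intro zc k
    rw [TensorProduct.smul_tmul', smul_eq_mul, mul_one]
  -- normal forms of the generators
  have cI : (starRingEnd ℂ) (-2*Complex.I) = 2*Complex.I := by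
    rw [map_mul, map_neg, map_ofNat, Complex.conj_I]; ring
  have c2 : (starRingEnd ℂ) (2:ℂ) = 2 := by rw [map_ofNat]
  have a0 : A 0 = (1:ℂ) ⊗ₜ[ℝ] b 0 + Complex.I • ((1:ℂ) ⊗ₜ[ℝ] b 2) := by
    rw [hA1, he Complex.I 2]
  have a1 : A 1 = (1:ℂ) ⊗ₜ[ℝ] b 1 + Complex.I • ((1:ℂ) ⊗ₜ[ℝ] b 3) := by
    rw [hA2, he Complex.I 3]
  have sa0 : σ (A 0) = (1:ℂ) ⊗ₜ[ℝ] b 0 + (-Complex.I) • ((1:ℂ) ⊗ₜ[ℝ] b 2) := by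
    rw [hA1, map_add, hσ, hσ, map_one, Complex.conj_I, he (-Complex.I) 2]
  have sa1 : σ (A 1) = (1:ℂ) ⊗ₜ[ℝ] b 1 + (-Complex.I) • ((1:ℂ) ⊗ₜ[ℝ] b 3) := by
    rw [hA2, map_add, hσ, hσ, map_one, Complex.conj_I, he (-Complex.I) 3]
  have b0' : B 0 = (-2*Complex.I) • ((1:ℂ) ⊗ₜ[ℝ] b 4) := by rw [hB1, he]
  have b1' : B 1 = (-2*Complex.I) • ((1:ℂ) ⊗ₜ[ℝ] b 5) := by rw [hB2, he]
  have c' : C = (-2*Complex.I) • ((1:ℂ) ⊗ₜ[ℝ] b 6) + (2:ℂ) • ((1:ℂ) ⊗ₜ[ℝ] b 7) := by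
    rw [hC, he (-2*Complex.I) 6, he (2:ℂ) 7]
  have sc : σ C = (2*Complex.I) • ((1:ℂ) ⊗ₜ[ℝ] b 6) + (2:ℂ) • ((1:ℂ) ⊗ₜ[ℝ] b 7) := by
    rw [hC, map_add, hσ, hσ, cI, c2, he (2*Complex.I) 6, he (2:ℂ) 7]
  have la : ∀ x y z : ℂ ⊗[ℝ] L, ⁅x, y + z⁆ = ⁅x, y⁆ + ⁅x, z⁆ := fun x y z => lie_add x y z
  have al : ∀ x y z : ℂ ⊗[ℝ] L, ⁅x + y, z⁆ = ⁅x, z⁆ + ⁅y, z⁆ := fun x y z => add_lie x y z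
  have hself : ∀ x : ℂ ⊗[ℝ] L, ⁅x, x⁆ = 0 := fun x => lie_self x
  have hskew : ∀ x y : ℂ ⊗[ℝ] L, ⁅x, y⁆ = -⁅y, x⁆ := fun x y => (lie_skew (x := x) (y := y)).symm
  have hzl : ∀ y : ℂ ⊗[ℝ] L, ⁅(0 : ℂ ⊗[ℝ] L), y⁆ = 0 := fun y => zero_lie y
  have hlz : ∀ y : ℂ ⊗[ℝ] L, ⁅y, (0 : ℂ ⊗[ℝ] L)⁆ = 0 := fun y => lie_zero y
  have sl : ∀ (c : ℂ) (x y : ℂ ⊗[ℝ] L), ⁅c • x, y⁆ = c • ⁅x, y⁆ := fun c x y => smul_lie c x y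
  have ls : ∀ (c : ℂ) (x y : ℂ ⊗[ℝ] L), ⁅x, c • y⁆ = c • ⁅x, y⁆ := fun c x y => lie_smul c x y
  -- the 27 generator bracket computations
  have caa : ⁅A 0, A 1⁆ = 0 := by
    rw [a0, a1]
    simp only [la, al, sl, ls, E, hself, lie_self, z01, z10, z23, z32, h1, h2,
      h3, h4, r20, r21, r30, r31, TensorProduct.tmul_zero, TensorProduct.tmul_neg, smul_zero,
      smul_neg, neg_zero, add_zero, zero_add]
    match_scalars <;> simp [Complex.ext_iff] <;> ring
  have cbb : ⁅σ (A 0), σ (A 1)⁆ = 0 := by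
    rw [sa0, sa1]
    simp only [la, al, sl, ls, E, hself, lie_self, z01, z10, z23, z32, h1, h2,
      h3, h4, r20, r21, r30, r31, TensorProduct.tmul_zero, TensorProduct.tmul_neg, smul_zero,
      smul_neg, neg_zero, add_zero, zero_add]
    match_scalars <;> simp [Complex.ext_iff] <;> ring
  have c00 : ⁅A 0, σ (A 0)⁆ = B 0 := by
    rw [sa0, a0, b0']
    simp only [la, al, sl, ls, E, hself, lie_self, z01, z10, z23, z32, h1, h2,
      h3, h4, r20, r21, r30, r31, TensorProduct.tmul_zero, TensorProduct.tmul_neg, smul_zero,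
      smul_neg, neg_zero, add_zero, zero_add]
    match_scalars <;> simp [Complex.ext_iff] <;> ring
  have c01 : ⁅A 0, σ (A 1)⁆ = B 1 := by
    rw [sa1, a0, b1']
    simp only [la, al, sl, ls, E, hself, lie_self, z01, z10, z23, z32, h1, h2,
      h3, h4, r20, r21, r30, r31, TensorProduct.tmul_zero, TensorProduct.tmul_neg, smul_zero,
      smul_neg, neg_zero, add_zero, zero_add]
    match_scalars <;> simp [Complex.ext_iff] <;> ring
  have c10 : ⁅A 1, σ (A 0)⁆ = B 1 := by
    rw [sa0, a1, b1']
    simp only [la, al, sl, ls, E, hself, lie_self, z01, z10, z23, z32, h1, h2,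
      h3, h4, r20, r21, r30, r31, TensorProduct.tmul_zero, TensorProduct.tmul_neg, smul_zero,
      smul_neg, neg_zero, add_zero, zero_add]
    match_scalars <;> simp [Complex.ext_iff] <;> ring
  have c11 : ⁅A 1, σ (A 1)⁆ = B 0 := by
    rw [sa1, a1, b0']
    simp only [la, al, sl, ls, E, hself, lie_self, z01, z10, z23, z32, h1, h2,
      h3, h4, r20, r21, r30, r31, TensorProduct.tmul_zero, TensorProduct.tmul_neg, smul_zero,
      smul_neg, neg_zero, add_zero, zero_add]
    match_scalars <;> simp [Complex.ext_iff] <;> ring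
  have d00 : ⁅A 0, B 0⁆ = C := by
    rw [a0, b0', c']
    simp only [la, al, sl, ls, E, hself, lie_self, h5, h7, z14, z34,
      TensorProduct.tmul_zero, TensorProduct.tmul_neg, smul_zero, smul_neg, neg_zero,
      add_zero, zero_add]
    match_scalars <;> simp [Complex.ext_iff] <;> ring
  have d01 : ⁅A 0, B 1⁆ = 0 := by
    rw [a0, b1']
    simp only [la, al, sl, ls, E, hself, lie_self, z05, z25,
      TensorProduct.tmul_zero, smul_zero, add_zero, zero_add]
  have d10 : ⁅A 1, B 0⁆ = 0 := by
    rw [a1, b0']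
    simp only [la, al, sl, ls, E, hself, lie_self, z14, z34,
      TensorProduct.tmul_zero, smul_zero, add_zero, zero_add]
  have d11 : ⁅A 1, B 1⁆ = C := by
    rw [a1, b1', c']
    simp only [la, al, sl, ls, E, hself, lie_self, h6, h8,
      TensorProduct.tmul_zero, TensorProduct.tmul_neg, smul_zero, smul_neg, neg_zero,
      add_zero, zero_add]
    match_scalars <;> simp [Complex.ext_iff] <;> ring
  have f00 : ⁅σ (A 0), B 0⁆ = -σ C := by
    rw [sa0, b0', sc]
    simp only [la, al, sl, ls, E, hself, lie_self, h5, h7,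
      TensorProduct.tmul_zero, TensorProduct.tmul_neg, smul_zero, smul_neg, neg_zero,
      add_zero, zero_add]
    match_scalars <;> simp [Complex.ext_iff] <;> ring
  have f01 : ⁅σ (A 0), B 1⁆ = 0 := by
    rw [sa0, b1']
    simp only [la, al, sl, ls, E, hself, lie_self, z05, z25,
      TensorProduct.tmul_zero, smul_zero, add_zero, zero_add]
  have f10 : ⁅σ (A 1), B 0⁆ = 0 := by
    rw [sa1, b0']
    simp only [la, al, sl, ls, E, hself, lie_self, z14, z34,
      TensorProduct.tmul_zero, smul_zero, add_zero, zero_add]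
  have f11 : ⁅σ (A 1), B 1⁆ = -σ C := by
    rw [sa1, b1', sc]
    simp only [la, al, sl, ls, E, hself, lie_self, h6, h8,
      TensorProduct.tmul_zero, TensorProduct.tmul_neg, smul_zero, smul_neg, neg_zero,
      add_zero, zero_add]
    match_scalars <;> simp [Complex.ext_iff] <;> ring
  have gac0 : ⁅A 0, C⁆ = 0 := by
    rw [a0, c']
    simp only [la, al, sl, ls, E, hself, lie_self, z06, z07, z26, z27,
      TensorProduct.tmul_zero, smul_zero, add_zero, zero_add]
  have gac1 : ⁅A 1, C⁆ = 0 := by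
    rw [a1, c']
    simp only [la, al, sl, ls, E, hself, lie_self, z16, z17, z36, z37,
      TensorProduct.tmul_zero, smul_zero, add_zero, zero_add]
  have gasc0 : ⁅A 0, σ C⁆ = 0 := by
    rw [a0, sc]
    simp only [la, al, sl, ls, E, hself, lie_self, z06, z07, z26, z27,
      TensorProduct.tmul_zero, smul_zero, add_zero, zero_add]
  have gasc1 : ⁅A 1, σ C⁆ = 0 := by
    rw [a1, sc]
    simp only [la, al, sl, ls, E, hself, lie_self, z16, z17, z36, z37,
      TensorProduct.tmul_zero, smul_zero, add_zero, zero_add]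
  have gsac0 : ⁅σ (A 0), C⁆ = 0 := by
    rw [sa0, c']
    simp only [la, al, sl, ls, E, hself, lie_self, z06, z07, z26, z27,
      TensorProduct.tmul_zero, smul_zero, add_zero, zero_add]
  have gsac1 : ⁅σ (A 1), C⁆ = 0 := by
    rw [sa1, c']
    simp only [la, al, sl, ls, E, hself, lie_self, z16, z17, z36, z37,
      TensorProduct.tmul_zero, smul_zero, add_zero, zero_add]
  have gsasc0 : ⁅σ (A 0), σ C⁆ = 0 := by
    rw [sa0, sc]
    simp only [la, al, sl, ls, E, hself, lie_self, z06, z07, z26, z27,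
      TensorProduct.tmul_zero, smul_zero, add_zero, zero_add]
  have gsasc1 : ⁅σ (A 1), σ C⁆ = 0 := by
    rw [sa1, sc]
    simp only [la, al, sl, ls, E, hself, lie_self, z16, z17, z36, z37,
      TensorProduct.tmul_zero, smul_zero, add_zero, zero_add]
  have kbb : ⁅B 0, B 1⁆ = 0 := by
    rw [b0', b1']
    simp only [sl, ls, E, hself, lie_self, z45, TensorProduct.tmul_zero, smul_zero]
  have kbc0 : ⁅B 0, C⁆ = 0 := by
    rw [b0', c']
    simp only [la, sl, ls, E, hself, lie_self, z46, z47, TensorProduct.tmul_zero, smul_zero,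
      add_zero]
  have kbc1 : ⁅B 1, C⁆ = 0 := by
    rw [b1', c']
    simp only [la, sl, ls, E, hself, lie_self, z56, z57, TensorProduct.tmul_zero, smul_zero,
      add_zero]
  have kbsc0 : ⁅B 0, σ C⁆ = 0 := by
    rw [b0', sc]
    simp only [la, sl, ls, E, hself, lie_self, z46, z47, TensorProduct.tmul_zero, smul_zero,
      add_zero]
  have kbsc1 : ⁅B 1, σ C⁆ = 0 := by
    rw [b1', sc]
    simp only [la, sl, ls, E, hself, lie_self, z56, z57, TensorProduct.tmul_zero, smul_zero,
      add_zero]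
  have kcsc : ⁅C, σ C⁆ = 0 := by
    rw [sc, c']
    simp only [la, al, sl, ls, E, hself, lie_self, z67, z76,
      TensorProduct.tmul_zero, smul_zero, add_zero, zero_add]
  -- conjugation facts
  have hσσ : ∀ x : ℂ ⊗[ℝ] L, σ (σ x) = x := by
    intro x
    induction x using TensorProduct.induction_on with
    | zero => simp
    | tmul z v => rw [hσ, hσ, Complex.conj_conj]
    | add x y hx hy => rw [map_add, map_add, hx, hy]
  have hσsmul : ∀ (c : ℂ) (x : ℂ ⊗[ℝ] L), σ (c • x) = (starRingEnd ℂ c) • σ x := by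
    intro c x
    induction x using TensorProduct.induction_on with
    | zero => simp
    | tmul z v =>
        rw [TensorProduct.smul_tmul', smul_eq_mul, hσ, map_mul, hσ, TensorProduct.smul_tmul',
          smul_eq_mul]
    | add x y hx hy => rw [smul_add, map_add, hx, hy, map_add, smul_add]
  have hsub : ∀ (s : Set (ℂ ⊗[ℝ] L)) (x : ℂ ⊗[ℝ] L),
      x ∈ Submodule.span ℂ s → σ x ∈ Submodule.span ℂ (σ '' s) := by
    intro s x hx
    induction hx using Submodule.span_induction with
    | mem y hy => exact Submodule.subset_span ⟨y, hy, rfl⟩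
    | zero => rw [map_zero]; exact Submodule.zero_mem _
    | add u v _ _ hu hv => rw [map_add]; exact Submodule.add_mem _ hu hv
    | smul c y _ hy => rw [hσsmul]; exact Submodule.smul_mem _ _ hy
  have himg : ∀ s : Set (ℂ ⊗[ℝ] L),
      σ '' (Submodule.span ℂ s : Set (ℂ ⊗[ℝ] L))
        = (Submodule.span ℂ (σ '' s) : Set (ℂ ⊗[ℝ] L)) := by
    intro s
    ext x
    constructor
    · rintro ⟨y, hy, rfl⟩
      exact hsub s y hy
    · intro hx
      refine ⟨σ x, ?_, hσσ x⟩
      have h2' := hsub (σ '' s) x hx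
      have : σ '' (σ '' s) = s := by
        rw [Set.image_image]
        simp only [hσσ, Set.image_id']
      rwa [this] at h2'
  -- the grading (bracket) statement, uniform in pairs of degrees
  have key : ∀ d e : ℤ × ℤ, ∀ x ∈ n d, ∀ y ∈ n e, ⁅x, y⁆ ∈ n (d + e) := by
    intro d e x hx y hy
    by_cases hd : d ∈ ({(-1, 0), (0, -1), (-1, -1), (-2, -1), (-1, -2)} : Set (ℤ × ℤ))
    swap
    · rw [hn0 d hd, Submodule.mem_bot] at hx
      subst hx; rw [hzl]; exact Submodule.zero_mem _
    by_cases hee : e ∈ ({(-1, 0), (0, -1), (-1, -1), (-2, -1), (-1, -2)} : Set (ℤ × ℤ))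
    swap
    · rw [hn0 e hee, Submodule.mem_bot] at hy
      subst hy; rw [hlz]; exact Submodule.zero_mem _
    simp only [Set.mem_insert_iff, Set.mem_singleton_iff] at hd hee
    rcases hd with rfl | rfl | rfl | rfl | rfl <;> rcases hee with rfl | rfl | rfl | rfl | rfl
    · -- (-1,0)+(-1,0)
      rw [hn1] at hx hy
      refine auxbr ?_ x hx y hy
      intro s hs t ht
      simp only [Set.mem_insert_iff, Set.mem_singleton_iff] at hs ht
      rcases hs with rfl | rfl <;> rcases ht with rfl | rfl
      · rw [hself]; exact Submodule.zero_mem _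
      · rw [caa]; exact Submodule.zero_mem _
      · rw [hskew, caa, neg_zero]; exact Submodule.zero_mem _
      · rw [hself]; exact Submodule.zero_mem _
    · -- (-1,0)+(0,-1) = (-1,-1)
      rw [hn1] at hx; rw [hn2] at hy
      rw [(by decide : ((-1, 0) : ℤ × ℤ) + (0, -1) = (-1, -1)), hn3]
      refine auxbr ?_ x hx y hy
      intro s hs t ht
      simp only [Set.mem_insert_iff, Set.mem_singleton_iff] at hs ht
      rcases hs with rfl | rfl <;> rcases ht with rfl | rfl
      · rw [c00]; exact Submodule.subset_span (by simp)
      · rw [c01]; exact Submodule.subset_span (by simp)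
      · rw [c10]; exact Submodule.subset_span (by simp)
      · rw [c11]; exact Submodule.subset_span (by simp)
    · -- (-1,0)+(-1,-1) = (-2,-1)
      rw [hn1] at hx; rw [hn3] at hy
      rw [(by decide : ((-1, 0) : ℤ × ℤ) + (-1, -1) = (-2, -1)), hn4]
      refine auxbr ?_ x hx y hy
      intro s hs t ht
      simp only [Set.mem_insert_iff, Set.mem_singleton_iff] at hs ht
      rcases hs with rfl | rfl <;> rcases ht with rfl | rfl
      · rw [d00]; exact Submodule.subset_span (by simp)
      · rw [d01]; exact Submodule.zero_mem _
      · rw [d10]; exact Submodule.zero_mem _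
      · rw [d11]; exact Submodule.subset_span (by simp)
    · -- (-1,0)+(-2,-1)
      rw [hn1] at hx; rw [hn4] at hy
      refine auxbr ?_ x hx y hy
      intro s hs t ht
      simp only [Set.mem_insert_iff, Set.mem_singleton_iff] at hs ht
      rcases hs with rfl | rfl <;> rcases ht with rfl
      · rw [gac0]; exact Submodule.zero_mem _
      · rw [gac1]; exact Submodule.zero_mem _
    · -- (-1,0)+(-1,-2)
      rw [hn1] at hx; rw [hn5] at hy
      refine auxbr ?_ x hx y hy
      intro s hs t ht
      simp only [Set.mem_insert_iff, Set.mem_singleton_iff] at hs ht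
      rcases hs with rfl | rfl <;> rcases ht with rfl
      · rw [gasc0]; exact Submodule.zero_mem _
      · rw [gasc1]; exact Submodule.zero_mem _
    · -- (0,-1)+(-1,0) = (-1,-1)
      rw [hn2] at hx; rw [hn1] at hy
      rw [(by decide : ((0, -1) : ℤ × ℤ) + (-1, 0) = (-1, -1)), hn3]
      refine auxbr ?_ x hx y hy
      intro s hs t ht
      simp only [Set.mem_insert_iff, Set.mem_singleton_iff] at hs ht
      rcases hs with rfl | rfl <;> rcases ht with rfl | rfl
      · rw [hskew, c00]; exact neg_mem (Submodule.subset_span (by simp))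
      · rw [hskew, c10]; exact neg_mem (Submodule.subset_span (by simp))
      · rw [hskew, c01]; exact neg_mem (Submodule.subset_span (by simp))
      · rw [hskew, c11]; exact neg_mem (Submodule.subset_span (by simp))
    · -- (0,-1)+(0,-1)
      rw [hn2] at hx hy
      refine auxbr ?_ x hx y hy
      intro s hs t ht
      simp only [Set.mem_insert_iff, Set.mem_singleton_iff] at hs ht
      rcases hs with rfl | rfl <;> rcases ht with rfl | rfl
      · rw [hself]; exact Submodule.zero_mem _
      · rw [cbb]; exact Submodule.zero_mem _
      · rw [hskew, cbb, neg_zero]; exact Submodule.zero_mem _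
      · rw [hself]; exact Submodule.zero_mem _
    · -- (0,-1)+(-1,-1) = (-1,-2)
      rw [hn2] at hx; rw [hn3] at hy
      rw [(by decide : ((0, -1) : ℤ × ℤ) + (-1, -1) = (-1, -2)), hn5]
      refine auxbr ?_ x hx y hy
      intro s hs t ht
      simp only [Set.mem_insert_iff, Set.mem_singleton_iff] at hs ht
      rcases hs with rfl | rfl <;> rcases ht with rfl | rfl
      · rw [f00]; exact neg_mem (Submodule.subset_span (by simp))
      · rw [f01]; exact Submodule.zero_mem _
      · rw [f10]; exact Submodule.zero_mem _
      · rw [f11]; exact neg_mem (Submodule.subset_span (by simp))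
    · -- (0,-1)+(-2,-1)
      rw [hn2] at hx; rw [hn4] at hy
      refine auxbr ?_ x hx y hy
      intro s hs t ht
      simp only [Set.mem_insert_iff, Set.mem_singleton_iff] at hs ht
      rcases hs with rfl | rfl <;> rcases ht with rfl
      · rw [gsac0]; exact Submodule.zero_mem _
      · rw [gsac1]; exact Submodule.zero_mem _
    · -- (0,-1)+(-1,-2)
      rw [hn2] at hx; rw [hn5] at hy
      refine auxbr ?_ x hx y hy
      intro s hs t ht
      simp only [Set.mem_insert_iff, Set.mem_singleton_iff] at hs ht
      rcases hs with rfl | rfl <;> rcases ht with rfl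
      · rw [gsasc0]; exact Submodule.zero_mem _
      · rw [gsasc1]; exact Submodule.zero_mem _
    · -- (-1,-1)+(-1,0) = (-2,-1)
      rw [hn3] at hx; rw [hn1] at hy
      rw [(by decide : ((-1, -1) : ℤ × ℤ) + (-1, 0) = (-2, -1)), hn4]
      refine auxbr ?_ x hx y hy
      intro s hs t ht
      simp only [Set.mem_insert_iff, Set.mem_singleton_iff] at hs ht
      rcases hs with rfl | rfl <;> rcases ht with rfl | rfl
      · rw [hskew, d00]; exact neg_mem (Submodule.subset_span (by simp))
      · rw [hskew, d10, neg_zero]; exact Submodule.zero_mem _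
      · rw [hskew, d01, neg_zero]; exact Submodule.zero_mem _
      · rw [hskew, d11]; exact neg_mem (Submodule.subset_span (by simp))
    · -- (-1,-1)+(0,-1) = (-1,-2)
      rw [hn3] at hx; rw [hn2] at hy
      rw [(by decide : ((-1, -1) : ℤ × ℤ) + (0, -1) = (-1, -2)), hn5]
      refine auxbr ?_ x hx y hy
      intro s hs t ht
      simp only [Set.mem_insert_iff, Set.mem_singleton_iff] at hs ht
      rcases hs with rfl | rfl <;> rcases ht with rfl | rfl
      · rw [hskew, f00, neg_neg]; exact Submodule.subset_span (by simp)
      · rw [hskew, f10, neg_zero]; exact Submodule.zero_mem _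
      · rw [hskew, f01, neg_zero]; exact Submodule.zero_mem _
      · rw [hskew, f11, neg_neg]; exact Submodule.subset_span (by simp)
    · -- (-1,-1)+(-1,-1)
      rw [hn3] at hx hy
      refine auxbr ?_ x hx y hy
      intro s hs t ht
      simp only [Set.mem_insert_iff, Set.mem_singleton_iff] at hs ht
      rcases hs with rfl | rfl <;> rcases ht with rfl | rfl
      · rw [hself]; exact Submodule.zero_mem _
      · rw [kbb]; exact Submodule.zero_mem _
      · rw [hskew, kbb, neg_zero]; exact Submodule.zero_mem _
      · rw [hself]; exact Submodule.zero_mem _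
    · -- (-1,-1)+(-2,-1)
      rw [hn3] at hx; rw [hn4] at hy
      refine auxbr ?_ x hx y hy
      intro s hs t ht
      simp only [Set.mem_insert_iff, Set.mem_singleton_iff] at hs ht
      rcases hs with rfl | rfl <;> rcases ht with rfl
      · rw [kbc0]; exact Submodule.zero_mem _
      · rw [kbc1]; exact Submodule.zero_mem _
    · -- (-1,-1)+(-1,-2)
      rw [hn3] at hx; rw [hn5] at hy
      refine auxbr ?_ x hx y hy
      intro s hs t ht
      simp only [Set.mem_insert_iff, Set.mem_singleton_iff] at hs ht
      rcases hs with rfl | rfl <;> rcases ht with rfl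
      · rw [kbsc0]; exact Submodule.zero_mem _
      · rw [kbsc1]; exact Submodule.zero_mem _
    · -- (-2,-1)+(-1,0)
      rw [hn4] at hx; rw [hn1] at hy
      refine auxbr ?_ x hx y hy
      intro s hs t ht
      simp only [Set.mem_insert_iff, Set.mem_singleton_iff] at hs ht
      rcases hs with rfl <;> rcases ht with rfl | rfl
      · rw [hskew, gac0, neg_zero]; exact Submodule.zero_mem _
      · rw [hskew, gac1, neg_zero]; exact Submodule.zero_mem _
    · -- (-2,-1)+(0,-1)
      rw [hn4] at hx; rw [hn2] at hy
      refine auxbr ?_ x hx y hy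
      intro s hs t ht
      simp only [Set.mem_insert_iff, Set.mem_singleton_iff] at hs ht
      rcases hs with rfl <;> rcases ht with rfl | rfl
      · rw [hskew, gsac0, neg_zero]; exact Submodule.zero_mem _
      · rw [hskew, gsac1, neg_zero]; exact Submodule.zero_mem _
    · -- (-2,-1)+(-1,-1)
      rw [hn4] at hx; rw [hn3] at hy
      refine auxbr ?_ x hx y hy
      intro s hs t ht
      simp only [Set.mem_insert_iff, Set.mem_singleton_iff] at hs ht
      rcases hs with rfl <;> rcases ht with rfl | rfl
      · rw [hskew, kbc0, neg_zero]; exact Submodule.zero_mem _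
      · rw [hskew, kbc1, neg_zero]; exact Submodule.zero_mem _
    · -- (-2,-1)+(-2,-1)
      rw [hn4] at hx hy
      refine auxbr ?_ x hx y hy
      intro s hs t ht
      simp only [Set.mem_singleton_iff] at hs ht
      rcases hs with rfl <;> rcases ht with rfl
      rw [hself]; exact Submodule.zero_mem _
    · -- (-2,-1)+(-1,-2)
      rw [hn4] at hx; rw [hn5] at hy
      refine auxbr ?_ x hx y hy
      intro s hs t ht
      simp only [Set.mem_singleton_iff] at hs ht
      rcases hs with rfl <;> rcases ht with rfl
      rw [kcsc]; exact Submodule.zero_mem _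
    · -- (-1,-2)+(-1,0)
      rw [hn5] at hx; rw [hn1] at hy
      refine auxbr ?_ x hx y hy
      intro s hs t ht
      simp only [Set.mem_insert_iff, Set.mem_singleton_iff] at hs ht
      rcases hs with rfl <;> rcases ht with rfl | rfl
      · rw [hskew, gasc0, neg_zero]; exact Submodule.zero_mem _
      · rw [hskew, gasc1, neg_zero]; exact Submodule.zero_mem _
    · -- (-1,-2)+(0,-1)
      rw [hn5] at hx; rw [hn2] at hy
      refine auxbr ?_ x hx y hy
      intro s hs t ht
      simp only [Set.mem_insert_iff, Set.mem_singleton_iff] at hs ht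
      rcases hs with rfl <;> rcases ht with rfl | rfl
      · rw [hskew, gsasc0, neg_zero]; exact Submodule.zero_mem _
      · rw [hskew, gsasc1, neg_zero]; exact Submodule.zero_mem _
    · -- (-1,-2)+(-1,-1)
      rw [hn5] at hx; rw [hn3] at hy
      refine auxbr ?_ x hx y hy
      intro s hs t ht
      simp only [Set.mem_insert_iff, Set.mem_singleton_iff] at hs ht
      rcases hs with rfl <;> rcases ht with rfl | rfl
      · rw [hskew, kbsc0, neg_zero]; exact Submodule.zero_mem _
      · rw [hskew, kbsc1, neg_zero]; exact Submodule.zero_mem _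
    · -- (-1,-2)+(-2,-1)
      rw [hn5] at hx; rw [hn4] at hy
      refine auxbr ?_ x hx y hy
      intro s hs t ht
      simp only [Set.mem_singleton_iff] at hs ht
      rcases hs with rfl <;> rcases ht with rfl
      rw [hskew, kcsc, neg_zero]; exact Submodule.zero_mem _
    · -- (-1,-2)+(-1,-2)
      rw [hn5] at hx hy
      refine auxbr ?_ x hx y hy
      intro s hs t ht
      simp only [Set.mem_singleton_iff] at hs ht
      rcases hs with rfl <;> rcases ht with rfl
      rw [hself]; exact Submodule.zero_mem _
  -- the basis v
  obtain ⟨v, hv⟩ : ∃ v : Fin 8 → ℂ ⊗[ℝ] L,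
      v = ![A 0, A 1, σ (A 0), σ (A 1), B 0, B 1, C, σ C] := ⟨_, rfl⟩
  have hv0 : v 0 = A 0 := by rw [hv]; rfl
  have hv1 : v 1 = A 1 := by rw [hv]; rfl
  have hv2 : v 2 = σ (A 0) := by rw [hv]; rfl
  have hv3 : v 3 = σ (A 1) := by rw [hv]; rfl
  have hv4 : v 4 = B 0 := by rw [hv]; rfl
  have hv5 : v 5 = B 1 := by rw [hv]; rfl
  have hv6 : v 6 = C := by rw [hv]; rfl
  have hv7 : v 7 = σ C := by rw [hv]; rfl
  obtain ⟨π, hπ⟩ : ∃ π : Fin 8 → ℤ × ℤ,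
      π = ![(-1, 0), (-1, 0), (0, -1), (0, -1), (-1, -1), (-1, -1), (-2, -1), (-1, -2)] :=
    ⟨_, rfl⟩
  have hπ0 : π 0 = (-1, 0) := by rw [hπ]; rfl
  have hπ1 : π 1 = (-1, 0) := by rw [hπ]; rfl
  have hπ2 : π 2 = (0, -1) := by rw [hπ]; rfl
  have hπ3 : π 3 = (0, -1) := by rw [hπ]; rfl
  have hπ4 : π 4 = (-1, -1) := by rw [hπ]; rfl
  have hπ5 : π 5 = (-1, -1) := by rw [hπ]; rfl
  have hπ6 : π 6 = (-2, -1) := by rw [hπ]; rfl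
  have hπ7 : π 7 = (-1, -2) := by rw [hπ]; rfl
  have hsp : ⊤ ≤ Submodule.span ℂ (Set.range v) := by
    rw [← (Module.Basis.baseChange ℂ b).span_eq]
    rw [Submodule.span_le]
    rintro x ⟨i, rfl⟩
    rw [Module.Basis.baseChange_apply]
    have mem : ∀ k : Fin 8, v k ∈ Submodule.span ℂ (Set.range v) := fun k =>
      Submodule.subset_span ⟨k, rfl⟩
    fin_cases i
    · show (1:ℂ) ⊗ₜ[ℝ] b 0 ∈ _
      rw [show (1:ℂ) ⊗ₜ[ℝ] b 0 = (2:ℂ)⁻¹ • (v 0 + v 2) by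
        rw [hv0, hv2, sa0, a0]; match_scalars <;> simp [Complex.ext_iff] <;> ring]
      exact Submodule.smul_mem _ _ (Submodule.add_mem _ (mem 0) (mem 2))
    · show (1:ℂ) ⊗ₜ[ℝ] b 1 ∈ _
      rw [show (1:ℂ) ⊗ₜ[ℝ] b 1 = (2:ℂ)⁻¹ • (v 1 + v 3) by
        rw [hv1, hv3, sa1, a1]; match_scalars <;> simp [Complex.ext_iff] <;> ring]
      exact Submodule.smul_mem _ _ (Submodule.add_mem _ (mem 1) (mem 3))
    · show (1:ℂ) ⊗ₜ[ℝ] b 2 ∈ _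
      rw [show (1:ℂ) ⊗ₜ[ℝ] b 2 = (-Complex.I/2) • (v 0 - v 2) by
        rw [hv0, hv2, sa0, a0]; match_scalars <;> simp [Complex.ext_iff] <;> ring]
      exact Submodule.smul_mem _ _ (Submodule.sub_mem _ (mem 0) (mem 2))
    · show (1:ℂ) ⊗ₜ[ℝ] b 3 ∈ _
      rw [show (1:ℂ) ⊗ₜ[ℝ] b 3 = (-Complex.I/2) • (v 1 - v 3) by
        rw [hv1, hv3, sa1, a1]; match_scalars <;> simp [Complex.ext_iff] <;> ring]
      exact Submodule.smul_mem _ _ (Submodule.sub_mem _ (mem 1) (mem 3))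
    · show (1:ℂ) ⊗ₜ[ℝ] b 4 ∈ _
      rw [show (1:ℂ) ⊗ₜ[ℝ] b 4 = (Complex.I/2) • v 4 by
        rw [hv4, b0']; match_scalars <;> simp [Complex.ext_iff] <;> ring]
      exact Submodule.smul_mem _ _ (mem 4)
    · show (1:ℂ) ⊗ₜ[ℝ] b 5 ∈ _
      rw [show (1:ℂ) ⊗ₜ[ℝ] b 5 = (Complex.I/2) • v 5 by
        rw [hv5, b1']; match_scalars <;> simp [Complex.ext_iff] <;> ring]
      exact Submodule.smul_mem _ _ (mem 5)
    · show (1:ℂ) ⊗ₜ[ℝ] b 6 ∈ _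
      rw [show (1:ℂ) ⊗ₜ[ℝ] b 6 = (Complex.I/4) • (v 6 - v 7) by
        rw [hv6, hv7, sc, c']; match_scalars <;> simp [Complex.ext_iff] <;> ring]
      exact Submodule.smul_mem _ _ (Submodule.sub_mem _ (mem 6) (mem 7))
    · show (1:ℂ) ⊗ₜ[ℝ] b 7 ∈ _
      rw [show (1:ℂ) ⊗ₜ[ℝ] b 7 = (4:ℂ)⁻¹ • (v 6 + v 7) by
        rw [hv6, hv7, sc, c']; match_scalars <;> simp [Complex.ext_iff] <;> ring]
      exact Submodule.smul_mem _ _ (Submodule.add_mem _ (mem 6) (mem 7))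
  have hcard : Fintype.card (Fin 8) = Module.finrank ℂ (ℂ ⊗[ℝ] L) :=
    (Module.finrank_eq_card_basis (Module.Basis.baseChange ℂ b)).symm
  have hli : LinearIndependent ℂ v := by
    have := (basisOfTopLeSpanOfCardEqFinrank v hsp hcard).linearIndependent
    rwa [coe_basisOfTopLeSpanOfCardEqFinrank] at this
  -- each graded piece is contained in the span of the matching basis vectors
  have hle : ∀ d : ℤ × ℤ, n d ≤ Submodule.span ℂ (v '' {i | π i = d}) := by
    intro d
    by_cases hd : d ∈ ({(-1, 0), (0, -1), (-1, -1), (-2, -1), (-1, -2)} : Set (ℤ × ℤ))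
    · simp only [Set.mem_insert_iff, Set.mem_singleton_iff] at hd
      rcases hd with rfl | rfl | rfl | rfl | rfl
      · rw [hn1, Submodule.span_le]
        intro x hx
        simp only [Set.mem_insert_iff, Set.mem_singleton_iff] at hx
        rcases hx with rfl | rfl
        · exact Submodule.subset_span ⟨0, hπ0, hv0⟩
        · exact Submodule.subset_span ⟨1, hπ1, hv1⟩
      · rw [hn2, Submodule.span_le]
        intro x hx
        simp only [Set.mem_insert_iff, Set.mem_singleton_iff] at hx
        rcases hx with rfl | rfl
        · exact Submodule.subset_span ⟨2, hπ2, hv2⟩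
        · exact Submodule.subset_span ⟨3, hπ3, hv3⟩
      · rw [hn3, Submodule.span_le]
        intro x hx
        simp only [Set.mem_insert_iff, Set.mem_singleton_iff] at hx
        rcases hx with rfl | rfl
        · exact Submodule.subset_span ⟨4, hπ4, hv4⟩
        · exact Submodule.subset_span ⟨5, hπ5, hv5⟩
      · rw [hn4, Submodule.span_le]
        intro x hx
        simp only [Set.mem_singleton_iff] at hx
        rcases hx with rfl
        exact Submodule.subset_span ⟨6, hπ6, hv6⟩
      · rw [hn5, Submodule.span_le]
        intro x hx
        simp only [Set.mem_singleton_iff] at hx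
        rcases hx with rfl
        exact Submodule.subset_span ⟨7, hπ7, hv7⟩
    · rw [hn0 d hd]; exact bot_le
  have hind : iSupIndep n := by
    rw [iSupIndep_def]
    intro d
    have hdisj : Disjoint ({i : Fin 8 | π i = d}) ({i : Fin 8 | π i ≠ d}) := by
      rw [Set.disjoint_left]
      intro i hi hi'
      exact hi' hi
    refine Disjoint.mono (hle d) ?_ (hli.disjoint_span_image hdisj)
    refine iSup₂_le fun j hj => le_trans (hle j) (Submodule.span_mono (Set.image_mono (f := v) ?_))
    intro i hi
    simp only [Set.mem_setOf_eq] at hi ⊢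
    rw [hi]; exact hj
  have hsup : (⨆ d, n d) = ⊤ := by
    apply le_antisymm le_top
    refine le_trans hsp ?_
    rw [Submodule.span_le]
    rintro x ⟨i, rfl⟩
    have hmem : ∀ k : Fin 8, v k ∈ ⨆ d, n d := by
      intro k
      fin_cases k
      · show v 0 ∈ ⨆ d, n d
        exact le_iSup n (-1, 0) (by rw [hv0, hn1]; exact Submodule.subset_span (by simp))
      · show v 1 ∈ ⨆ d, n d
        exact le_iSup n (-1, 0) (by rw [hv1, hn1]; exact Submodule.subset_span (by simp))
      · show v 2 ∈ ⨆ d, n d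
        exact le_iSup n (0, -1) (by rw [hv2, hn2]; exact Submodule.subset_span (by simp))
      · show v 3 ∈ ⨆ d, n d
        exact le_iSup n (0, -1) (by rw [hv3, hn2]; exact Submodule.subset_span (by simp))
      · show v 4 ∈ ⨆ d, n d
        exact le_iSup n (-1, -1) (by rw [hv4, hn3]; exact Submodule.subset_span (by simp))
      · show v 5 ∈ ⨆ d, n d
        exact le_iSup n (-1, -1) (by rw [hv5, hn3]; exact Submodule.subset_span (by simp))
      · show v 6 ∈ ⨆ d, n d
        exact le_iSup n (-2, -1) (by rw [hv6, hn4]; exact Submodule.subset_span (by simp))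
      · show v 7 ∈ ⨆ d, n d
        exact le_iSup n (-1, -2) (by rw [hv7, hn5]; exact Submodule.subset_span (by simp))
    exact hmem i
  refine ⟨DirectSum.isInternal_submodule_of_iSupIndep_of_iSup_eq_top hind hsup, ?_, ?_⟩
  · intro p q r s x hx y hy
    exact key (p, q) (r, s) x hx y hy
  · -- conjugation symmetry
    intro p q
    by_cases hm : ((p, q) : ℤ × ℤ) ∈ ({(-1, 0), (0, -1), (-1, -1), (-2, -1), (-1, -2)} :
        Set (ℤ × ℤ))
    · simp only [Set.mem_insert_iff, Set.mem_singleton_iff, Prod.mk.injEq] at hm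
      rcases hm with ⟨rfl, rfl⟩ | ⟨rfl, rfl⟩ | ⟨rfl, rfl⟩ | ⟨rfl, rfl⟩ | ⟨rfl, rfl⟩
      · rw [hn1, hn2, himg, Set.image_insert_eq, Set.image_singleton]
      · rw [hn2, hn1, himg, Set.image_insert_eq, Set.image_singleton, hσσ, hσσ]
      · rw [hn3, himg, Set.image_insert_eq, Set.image_singleton]
        have sB0 : σ (B 0) = -B 0 := by
          rw [hB1, hσ, cI, ← TensorProduct.neg_tmul]
          congr 1; ring
        have sB1 : σ (B 1) = -B 1 := by
          rw [hB2, hσ, cI, ← TensorProduct.neg_tmul]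
          congr 1; ring
        rw [sB0, sB1]
        have hspan : Submodule.span ℂ ({-B 0, -B 1} : Set (ℂ ⊗[ℝ] L))
            = Submodule.span ℂ ({B 0, B 1} : Set (ℂ ⊗[ℝ] L)) := by
          apply le_antisymm
          · rw [Submodule.span_le]
            intro x hx
            simp only [Set.mem_insert_iff, Set.mem_singleton_iff] at hx
            rcases hx with rfl | rfl
            · exact neg_mem (Submodule.subset_span (by simp))
            · exact neg_mem (Submodule.subset_span (by simp))
          · rw [Submodule.span_le]
            intro x hx
            simp only [Set.mem_insert_iff, Set.mem_singleton_iff] at hx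
            rcases hx with rfl | rfl
            · rw [show B 0 = -(-B 0) by rw [neg_neg]]
              exact neg_mem (Submodule.subset_span (by simp))
            · rw [show B 1 = -(-B 1) by rw [neg_neg]]
              exact neg_mem (Submodule.subset_span (by simp))
        rw [hspan]
      · rw [hn4, hn5, himg, Set.image_singleton]
      · rw [hn5, hn4, himg, Set.image_singleton, hσσ]
    · have hm' : ((q, p) : ℤ × ℤ) ∉ ({(-1, 0), (0, -1), (-1, -1), (-2, -1), (-1, -2)} :
          Set (ℤ × ℤ)) := by
        intro h
        apply hm
        simp only [Set.mem_insert_iff, Set.mem_singleton_iff, Prod.mk.injEq] at h ⊢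
        tauto
      rw [hn0 _ hm, hn0 _ hm']
      simp only [Submodule.bot_coe, Set.image_singleton, map_zero]
end
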